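/- arXiv:2003.07975 — 12 statements merged into one kernel-verified Lean document; each statement's English description precedes it below -/
import Mathlib

section
/- Let x¹, x², x̂ ∈ ℝⁿ with x¹ ≤ x̂ and x² ≤ x̂, let i be a coordinate index, and let y¹ ∈ [x¹, x̂] with y¹_i = x¹_i. Then there exists y² ∈ [x², x̂] with y²_i = x²_i and ‖y¹ − y²‖₁ ≤ ‖x¹ − x²‖₁, where ‖·‖₁ denotes the ℓ¹ norm on ℝⁿ. -/
/-- Given `x¹ ≤ x̂`, `x² ≤ x̂`, a coordinate `i`, and `y¹ ∈ [x¹, x̂]` with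
`y¹_i = x¹_i`, there exists `y² ∈ [x², x̂]` with `y²_i = x²_i` and `‖y¹ − y²‖₁ ≤ ‖x¹ − x²‖₁`. -/
theorem stmt0 {n : ℕ} (x1 x2 xh : Fin n → ℝ)
    (h1 : x1 ≤ xh) (h2 : x2 ≤ xh) (i : Fin n)
    (y1 : Fin n → ℝ) (hy1l : x1 ≤ y1) (hy1u : y1 ≤ xh) (hy1i : y1 i = x1 i) :
    ∃ y2 : Fin n → ℝ, x2 ≤ y2 ∧ y2 ≤ xh ∧ y2 i = x2 i ∧
      ∑ j, |y1 j - y2 j| ≤ ∑ j, |x1 j - x2 j| := by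
  refine ⟨fun j => if j = i then x2 j else max (x2 j) (y1 j), ?_, ?_, by simp, ?_⟩
  · intro j; by_cases h : j = i <;> simp [h, le_max_left]
  · intro j
    by_cases h : j = i
    · simpa [h] using h2 i
    · simpa [h] using max_le (h2 j) (hy1u j)
  · apply Finset.sum_le_sum
    intro j _
    by_cases h : j = i
    · subst h; simp [hy1i]
    · simp only [if_neg h]
      rcases le_or_gt (x2 j) (y1 j) with hc | hc
      · simp [max_eq_right hc, abs_nonneg]
      · rw [max_eq_left hc.le, abs_sub_comm, abs_of_nonneg (by linarith), abs_sub_comm,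
          abs_of_nonneg (by linarith [hy1l j])]
        linarith [hy1l j]
end

section
/- Suppose F : ℝⁿ × ℝᵐ → ℝⁿ satisfies |F_i(y,z) − F_i(y′,z′)| ≤ L(‖y−y′‖₁ + ‖z−z′‖₁) for all i, y, y′, z, z′. Then for any two quadruples (x¹,w¹,x̂¹,ŵ¹) and (x²,w²,x̂²,ŵ²) with x¹ ≤ x̂¹, w¹ ≤ ŵ¹, x² ≤ x̂², w² ≤ ŵ², and for every coordinate i, |δ_i(x¹,w¹,x̂¹,ŵ¹) − δ_i(x²,w²,x̂²,ŵ²)| ≤ L(‖x¹−x²‖₁ + ‖x̂¹−x̂²‖₁ + ‖w¹−w²‖₁ + ‖ŵ¹−ŵ²‖₁); that is, the tight construction δ is Lipschitz continuous on the ordered part of its domain. -/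
/-- The minimization branch of the tight decomposition-function construction:
`δ_i(x,w,x̂,ŵ) = min { F_i(y,z) : y ∈ [x,x̂], y_i = x_i, z ∈ [w,ŵ] }`. -/
noncomputable def tightMin {n m : ℕ} (F : (Fin n → ℝ) → (Fin m → ℝ) → Fin n → ℝ)
    (x : Fin n → ℝ) (w : Fin m → ℝ) (xh : Fin n → ℝ) (wh : Fin m → ℝ) (i : Fin n) : ℝ :=
  sInf {v : ℝ | ∃ y : Fin n → ℝ, ∃ z : Fin m → ℝ,
    x ≤ y ∧ y ≤ xh ∧ y i = x i ∧ w ≤ z ∧ z ≤ wh ∧ v = F y z i}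

private lemma clamp_abs (a1 b1 a2 b2 y : ℝ) (h1 : a1 ≤ y) (h2 : y ≤ b1) :
    |y - max a2 (min b2 y)| ≤ |a1 - a2| + |b1 - b2| := by
  have h3 : y - max a2 (min b2 y) ≤ |b1 - b2| := by
    have hmx : min b2 y ≤ max a2 (min b2 y) := le_max_right _ _
    rcases le_total y b2 with h | h
    · have he : min b2 y = y := min_eq_right h
      have := abs_nonneg (b1 - b2); linarith
    · have he : min b2 y = b2 := min_eq_left h
      have := le_abs_self (b1 - b2); linarith
  have h4 : max a2 (min b2 y) - y ≤ |a1 - a2| := by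
    have hm : min b2 y ≤ y := min_le_right _ _
    rcases le_total a2 y with h | h
    · have : max a2 (min b2 y) ≤ y := max_le h hm
      have := abs_nonneg (a1 - a2); linarith
    · have : max a2 (min b2 y) ≤ a2 := max_le le_rfl (hm.trans h)
      have := neg_abs_le (a1 - a2); linarith
  rw [abs_le]
  constructor <;> linarith [abs_nonneg (a1 - a2), abs_nonneg (b1 - b2)]

private lemma key {n m : ℕ} (F : (Fin n → ℝ) → (Fin m → ℝ) → Fin n → ℝ) (L : ℝ)
    (hF : ∀ (i : Fin n) (y y' : Fin n → ℝ) (z z' : Fin m → ℝ),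
      |F y z i - F y' z' i| ≤ L * ((∑ j, |y j - y' j|) + ∑ k, |z k - z' k|))
    (hL : 0 ≤ L)
    (x1 x2 xh1 xh2 : Fin n → ℝ) (w1 w2 wh1 wh2 : Fin m → ℝ)
    (hx1 : x1 ≤ xh1) (hw1 : w1 ≤ wh1) (hx2 : x2 ≤ xh2) (hw2 : w2 ≤ wh2) (i : Fin n) :
    tightMin F x2 w2 xh2 wh2 i ≤ tightMin F x1 w1 xh1 wh1 i +
      L * ((∑ j, |x1 j - x2 j|) + (∑ j, |xh1 j - xh2 j|) +
           (∑ k, |w1 k - w2 k|) + ∑ k, |wh1 k - wh2 k|) := by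
  set D := L * ((∑ j, |x1 j - x2 j|) + (∑ j, |xh1 j - xh2 j|) +
           (∑ k, |w1 k - w2 k|) + ∑ k, |wh1 k - wh2 k|) with hD
  set S1 := {v : ℝ | ∃ y : Fin n → ℝ, ∃ z : Fin m → ℝ,
    x1 ≤ y ∧ y ≤ xh1 ∧ y i = x1 i ∧ w1 ≤ z ∧ z ≤ wh1 ∧ v = F y z i} with hS1
  set S2 := {v : ℝ | ∃ y : Fin n → ℝ, ∃ z : Fin m → ℝ,
    x2 ≤ y ∧ y ≤ xh2 ∧ y i = x2 i ∧ w2 ≤ z ∧ z ≤ wh2 ∧ v = F y z i} with hS2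
  have hS1ne : S1.Nonempty :=
    ⟨F x1 w1 i, x1, w1, le_refl _, hx1, rfl, le_refl _, hw1, rfl⟩
  have hS2bdd : BddBelow S2 := by
    refine ⟨F x2 w2 i - L * ((∑ j, (xh2 j - x2 j)) + ∑ k, (wh2 k - w2 k)), ?_⟩
    rintro v ⟨y, z, hy1, hy2, hyi, hz1, hz2, rfl⟩
    have h := hF i y x2 z w2
    have hsum : (∑ j, |y j - x2 j|) + ∑ k, |z k - w2 k| ≤
        (∑ j, (xh2 j - x2 j)) + ∑ k, (wh2 k - w2 k) := by
      gcongr with j _ k _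
      · rw [abs_of_nonneg (by linarith [hy1 j])]; linarith [hy2 j]
      · rw [abs_of_nonneg (by linarith [hz1 k])]; linarith [hz2 k]
    have hm := mul_le_mul_of_nonneg_left hsum hL
    have habs := abs_le.mp h
    linarith [habs.1, habs.2]
  have hkey : ∀ v ∈ S1, sInf S2 - D ≤ v := by
    rintro v ⟨y, z, hy1, hy2, hyi, hz1, hz2, rfl⟩
    set y' : Fin n → ℝ := fun j => if j = i then x2 i else max (x2 j) (min (xh2 j) (y j))
      with hy'
    set z' : Fin m → ℝ := fun k => max (w2 k) (min (wh2 k) (z k)) with hz'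
    have hmem : F y' z' i ∈ S2 := by
      refine ⟨y', z', ?_, ?_, ?_, ?_, ?_, rfl⟩
      · intro j
        by_cases hj : j = i
        · subst hj; simp [hy']
        · simp only [hy', hj, if_false]; exact le_max_left _ _
      · intro j
        by_cases hj : j = i
        · subst hj; simp only [hy', if_pos rfl]; exact hx2 j
        · simp only [hy', hj, if_false]
          exact max_le (hx2 j) (min_le_left _ _)
      · simp [hy']
      · intro k; exact le_max_left _ _
      · intro k; exact max_le (hw2 k) (min_le_left _ _)
    have hle2 : sInf S2 ≤ F y' z' i := csInf_le hS2bdd hmem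
    have hsum1 : ∑ j, |y j - y' j| ≤ (∑ j, |x1 j - x2 j|) + ∑ j, |xh1 j - xh2 j| := by
      rw [← Finset.sum_add_distrib]
      refine Finset.sum_le_sum fun j _ => ?_
      by_cases hj : j = i
      · subst hj
        simp only [hy', if_pos rfl, hyi]
        have : (0:ℝ) ≤ |xh1 j - xh2 j| := abs_nonneg _
        linarith
      · simp only [hy', hj, if_false]
        exact clamp_abs (x1 j) (xh1 j) (x2 j) (xh2 j) (y j) (hy1 j) (hy2 j)
    have hsum2 : ∑ k, |z k - z' k| ≤ (∑ k, |w1 k - w2 k|) + ∑ k, |wh1 k - wh2 k| := by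
      rw [← Finset.sum_add_distrib]
      exact Finset.sum_le_sum fun k _ =>
        clamp_abs (w1 k) (wh1 k) (w2 k) (wh2 k) (z k) (hz1 k) (hz2 k)
    have h := hF i y y' z z'
    have hmul := mul_le_mul_of_nonneg_left (add_le_add hsum1 hsum2) hL
    have habs := abs_le.mp h
    rw [hD]
    linarith [habs.1, habs.2]
  have hfin : sInf S2 - D ≤ sInf S1 := le_csInf hS1ne hkey
  show sInf S2 ≤ sInf S1 + D
  linarith

/-- if each component of `F` is `L`-Lipschitz with respect to the sum of the
ℓ¹ distances of the arguments, then the tight construction `δ` is Lipschitz on the ordered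
part of its domain, with the analogous bound. -/
theorem stmt1 {n m : ℕ} (F : (Fin n → ℝ) → (Fin m → ℝ) → Fin n → ℝ) (L : ℝ)
    (hF : ∀ (i : Fin n) (y y' : Fin n → ℝ) (z z' : Fin m → ℝ),
      |F y z i - F y' z' i| ≤ L * ((∑ j, |y j - y' j|) + ∑ k, |z k - z' k|))
    (x1 x2 xh1 xh2 : Fin n → ℝ) (w1 w2 wh1 wh2 : Fin m → ℝ)
    (hx1 : x1 ≤ xh1) (hw1 : w1 ≤ wh1) (hx2 : x2 ≤ xh2) (hw2 : w2 ≤ wh2) (i : Fin n) :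
    |tightMin F x1 w1 xh1 wh1 i - tightMin F x2 w2 xh2 wh2 i| ≤
      L * ((∑ j, |x1 j - x2 j|) + (∑ j, |xh1 j - xh2 j|) +
           (∑ k, |w1 k - w2 k|) + ∑ k, |wh1 k - wh2 k|) := by
  have hL : 0 ≤ L := by
    have h := hF i (fun _ => 0) (fun _ => 1) (fun _ => 0) (fun _ => 0)
    simp [Finset.sum_const] at h
    have hn : (0:ℝ) < n := by exact_mod_cast i.pos
    nlinarith [abs_nonneg (F (fun _ => 0) (fun _ => 0) i - F (fun _ => 1) (fun _ => 0) i)]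
  have h12 := key F L hF hL x1 x2 xh1 xh2 w1 w2 wh1 wh2 hx1 hw1 hx2 hw2 i
  have h21 := key F L hF hL x2 x1 xh2 xh1 w2 w1 wh2 wh1 hx2 hw2 hx1 hw1 i
  have e1 : (∑ j, |x2 j - x1 j|) = ∑ j, |x1 j - x2 j| :=
    Finset.sum_congr rfl fun j _ => abs_sub_comm _ _
  have e2 : (∑ j, |xh2 j - xh1 j|) = ∑ j, |xh1 j - xh2 j| :=
    Finset.sum_congr rfl fun j _ => abs_sub_comm _ _
  have e3 : (∑ k, |w2 k - w1 k|) = ∑ k, |w1 k - w2 k| :=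
    Finset.sum_congr rfl fun k _ => abs_sub_comm _ _
  have e4 : (∑ k, |wh2 k - wh1 k|) = ∑ k, |wh1 k - wh2 k| :=
    Finset.sum_congr rfl fun k _ => abs_sub_comm _ _
  rw [e1, e2, e3, e4] at h21
  rw [abs_sub_le_iff]
  constructor <;> linarith
end

section
/- If F : ℝⁿ × ℝᵐ → ℝⁿ is continuous, then the tight construction δ is a decomposition function for F: it satisfies (D1) δ(x,w,x,w) = F(x,w) for all x, w, and the Kamke conditions (C1) and (C2) on T. -/
/-- Membership of a quadruple `(x,w,x̂,ŵ)` in the set `T` of (jointly) ordered or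
reverse-ordered pairs of state/disturbance points. -/
def InT {n m : ℕ} (x : Fin n → ℝ) (w : Fin m → ℝ) (xh : Fin n → ℝ) (wh : Fin m → ℝ) : Prop :=
  (x ≤ xh ∧ w ≤ wh) ∨ (xh ≤ x ∧ wh ≤ w)

/-- `d` is a decomposition function for `F`: it agrees with `F` on the diagonal (D1) and
satisfies the Kamke conditions (C1) and (C2) on `T`. -/
def IsDecompFn {n m : ℕ} (F : (Fin n → ℝ) → (Fin m → ℝ) → Fin n → ℝ)
    (d : (Fin n → ℝ) → (Fin m → ℝ) → (Fin n → ℝ) → (Fin m → ℝ) → Fin n → ℝ) : Prop :=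
  (∀ (x : Fin n → ℝ) (w : Fin m → ℝ), d x w x w = F x w) ∧
  (∀ (i : Fin n) (x y xh : Fin n → ℝ) (w v wh : Fin m → ℝ),
      InT x w xh wh → InT y v xh wh → x ≤ y → x i = y i → w ≤ v →
      d x w xh wh i ≤ d y v xh wh i) ∧
  (∀ (i : Fin n) (x xh yh : Fin n → ℝ) (w wh vh : Fin m → ℝ),
      InT x w xh wh → InT x w yh vh → xh ≤ yh → wh ≤ vh →
      d x w yh vh i ≤ d x w xh wh i)

open Classical in
/-- The tight decomposition-function construction: a minimum of `F_i` over a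
hyperrectangular slice when the arguments are ordered, and a maximum when they are
reverse-ordered. -/
noncomputable def tightDecomp {n m : ℕ} (F : (Fin n → ℝ) → (Fin m → ℝ) → Fin n → ℝ)
    (x : Fin n → ℝ) (w : Fin m → ℝ) (xh : Fin n → ℝ) (wh : Fin m → ℝ) : Fin n → ℝ :=
  fun i =>
    if x ≤ xh ∧ w ≤ wh then
      sInf {v : ℝ | ∃ y : Fin n → ℝ, ∃ z : Fin m → ℝ,
        x ≤ y ∧ y ≤ xh ∧ y i = x i ∧ w ≤ z ∧ z ≤ wh ∧ v = F y z i}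
    else
      sSup {v : ℝ | ∃ y : Fin n → ℝ, ∃ z : Fin m → ℝ,
        xh ≤ y ∧ y ≤ x ∧ y i = x i ∧ wh ≤ z ∧ z ≤ w ∧ v = F y z i}

open Set in
/-- The slice-constrained image sets appearing in the tight construction are bounded,
being contained in the continuous image of a compact box. -/
lemma tight_bdd_aux {n m : ℕ} (F : (Fin n → ℝ) → (Fin m → ℝ) → Fin n → ℝ)
    (hF : Continuous fun p : (Fin n → ℝ) × (Fin m → ℝ) => F p.1 p.2) (i : Fin n)
    (a b : Fin n → ℝ) (c : ℝ) (p q : Fin m → ℝ) :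
    BddBelow {v : ℝ | ∃ y : Fin n → ℝ, ∃ z : Fin m → ℝ,
        a ≤ y ∧ y ≤ b ∧ y i = c ∧ p ≤ z ∧ z ≤ q ∧ v = F y z i} ∧
    BddAbove {v : ℝ | ∃ y : Fin n → ℝ, ∃ z : Fin m → ℝ,
        a ≤ y ∧ y ≤ b ∧ y i = c ∧ p ≤ z ∧ z ≤ q ∧ v = F y z i} := by
  have hsub : {v : ℝ | ∃ y : Fin n → ℝ, ∃ z : Fin m → ℝ,
        a ≤ y ∧ y ≤ b ∧ y i = c ∧ p ≤ z ∧ z ≤ q ∧ v = F y z i}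
      ⊆ (fun pr : (Fin n → ℝ) × (Fin m → ℝ) => F pr.1 pr.2 i) '' (Icc a b ×ˢ Icc p q) := by
    rintro v ⟨y, z, h1, h2, _, h4, h5, rfl⟩
    exact ⟨(y, z), ⟨⟨h1, h2⟩, h4, h5⟩, rfl⟩
  have hc : IsCompact ((fun pr : (Fin n → ℝ) × (Fin m → ℝ) => F pr.1 pr.2 i) ''
      (Icc a b ×ˢ Icc p q)) :=
    (isCompact_Icc.prod isCompact_Icc).image ((continuous_apply i).comp hF)
  exact ⟨hc.bddBelow.mono hsub, hc.bddAbove.mono hsub⟩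

/-- for continuous `F`, the tight construction `δ` is a decomposition
function for `F`: it satisfies (D1) and the Kamke conditions (C1), (C2) on `T`. -/
theorem stmt2 {n m : ℕ} (F : (Fin n → ℝ) → (Fin m → ℝ) → Fin n → ℝ)
    (hF : Continuous fun p : (Fin n → ℝ) × (Fin m → ℝ) => F p.1 p.2) :
    IsDecompFn F (tightDecomp F) := by
  refine ⟨?_, ?_, ?_⟩
  · -- (D1)
    intro x w
    funext i
    simp only [tightDecomp, if_pos (And.intro (le_refl x) (le_refl w))]
    have hset : {v : ℝ | ∃ y : Fin n → ℝ, ∃ z : Fin m → ℝ,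
        x ≤ y ∧ y ≤ x ∧ y i = x i ∧ w ≤ z ∧ z ≤ w ∧ v = F y z i} = {F x w i} := by
      ext v
      constructor
      · rintro ⟨y, z, h1, h2, _, h4, h5, rfl⟩
        have hy : y = x := le_antisymm h2 h1
        have hz : z = w := le_antisymm h5 h4
        simp [hy, hz]
      · rintro rfl
        exact ⟨x, w, le_refl _, le_refl _, rfl, le_refl _, le_refl _, rfl⟩
    rw [hset, csInf_singleton]
  · -- (C1)
    intro i x y xh w v wh hT1 hT2 hxy hxyi hwv
    simp only [tightDecomp]
    by_cases h1 : x ≤ xh ∧ w ≤ wh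
    · rw [if_pos h1]
      by_cases h2 : y ≤ xh ∧ v ≤ wh
      · rw [if_pos h2]
        apply csInf_le_csInf (tight_bdd_aux F hF i x xh (x i) w wh).1
        · exact ⟨F y v i, y, v, le_refl _, h2.1, rfl, le_refl _, h2.2, rfl⟩
        · rintro _ ⟨y', z, ha, hb, hc, hd, he, rfl⟩
          exact ⟨y', z, le_trans hxy ha, hb, by rw [hc, hxyi], le_trans hwv hd, he, rfl⟩
      · rw [if_neg h2]
        have hT2' : xh ≤ y ∧ wh ≤ v := hT2.resolve_left h2
        have hxhi : xh i = x i := le_antisymm (hxyi ▸ hT2'.1 i) (h1.1 i)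
        calc sInf _ ≤ F xh wh i := csInf_le (tight_bdd_aux F hF i x xh (x i) w wh).1
              ⟨xh, wh, h1.1, le_refl _, hxhi, h1.2, le_refl _, rfl⟩
          _ ≤ sSup _ := le_csSup (tight_bdd_aux F hF i xh y (y i) wh v).2
              ⟨xh, wh, le_refl _, hT2'.1, by rw [hxhi, hxyi], le_refl _, hT2'.2, rfl⟩
    · rw [if_neg h1]
      have hT1' : xh ≤ x ∧ wh ≤ w := hT1.resolve_left h1
      by_cases h2 : y ≤ xh ∧ v ≤ wh
      · exact absurd ⟨le_trans hxy h2.1, le_trans hwv h2.2⟩ h1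
      · rw [if_neg h2]
        apply csSup_le_csSup (tight_bdd_aux F hF i xh y (y i) wh v).2
        · exact ⟨F x w i, x, w, hT1'.1, le_refl _, rfl, hT1'.2, le_refl _, rfl⟩
        · rintro _ ⟨y', z, ha, hb, hc, hd, he, rfl⟩
          exact ⟨y', z, ha, le_trans hb hxy, by rw [hc, hxyi], hd, le_trans he hwv, rfl⟩
  · -- (C2)
    intro i x xh yh w wh vh hT1 hT2 hxy hwv
    simp only [tightDecomp]
    by_cases h1 : x ≤ xh ∧ w ≤ wh
    · rw [if_pos h1, if_pos ⟨le_trans h1.1 hxy, le_trans h1.2 hwv⟩]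
      apply csInf_le_csInf (tight_bdd_aux F hF i x yh (x i) w vh).1
      · exact ⟨F x w i, x, w, le_refl _, h1.1, rfl, le_refl _, h1.2, rfl⟩
      · rintro _ ⟨y', z, ha, hb, hc, hd, he, rfl⟩
        exact ⟨y', z, ha, le_trans hb hxy, hc, hd, le_trans he hwv, rfl⟩
    · rw [if_neg h1]
      have hT1' : xh ≤ x ∧ wh ≤ w := hT1.resolve_left h1
      by_cases h2 : x ≤ yh ∧ w ≤ vh
      · rw [if_pos h2]
        calc sInf _ ≤ F x w i := csInf_le (tight_bdd_aux F hF i x yh (x i) w vh).1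
              ⟨x, w, le_refl _, h2.1, rfl, le_refl _, h2.2, rfl⟩
          _ ≤ sSup _ := le_csSup (tight_bdd_aux F hF i xh x (x i) wh w).2
              ⟨x, w, hT1'.1, le_refl _, rfl, hT1'.2, le_refl _, rfl⟩
      · rw [if_neg h2]
        have hT2' : yh ≤ x ∧ vh ≤ w := hT2.resolve_left h2
        apply csSup_le_csSup (tight_bdd_aux F hF i xh x (x i) wh w).2
        · exact ⟨F x w i, x, w, hT2'.1, le_refl _, rfl, hT2'.2, le_refl _, rfl⟩
        · rintro _ ⟨y', z, ha, hb, hc, hd, he, rfl⟩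
          exact ⟨y', z, le_trans hxy ha, hb, hc, le_trans hwv hd, he, rfl⟩
end

section
/- Let F : ℝⁿ × ℝᵐ → ℝⁿ be continuous and let d be any decomposition function for F. Then for all x ≤ x̂ in ℝⁿ, all w ≤ ŵ in ℝᵐ, and every coordinate i: d_i(x,w,x̂,ŵ) ≤ min{F_i(y,z) : y ∈ [x,x̂], y_i = x_i, z ∈ [w,ŵ]} and max{F_i(y,z) : y ∈ [x,x̂], y_i = x̂_i, z ∈ [w,ŵ]} ≤ d_i(x̂,ŵ,x,w). In other words, the tight construction δ dominates every decomposition function: d(x,w,x̂,ŵ) ≤ δ(x,w,x̂,ŵ) and δ(x̂,ŵ,x,w) ≤ d(x̂,ŵ,x,w) componentwise. -/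
/-- every decomposition function `d` for a continuous `F` is dominated by the
tight construction: `d_i(x,w,x̂,ŵ) ≤ min{F_i(y,z) : y ∈ [x,x̂], y_i = x_i, z ∈ [w,ŵ]}` and
`max{F_i(y,z) : y ∈ [x,x̂], y_i = x̂_i, z ∈ [w,ŵ]} ≤ d_i(x̂,ŵ,x,w)` whenever `x ≤ x̂`, `w ≤ ŵ`. -/
theorem stmt3 {n m : ℕ} (F : (Fin n → ℝ) → (Fin m → ℝ) → Fin n → ℝ)
    (hF : Continuous fun p : (Fin n → ℝ) × (Fin m → ℝ) => F p.1 p.2)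
    (d : (Fin n → ℝ) → (Fin m → ℝ) → (Fin n → ℝ) → (Fin m → ℝ) → Fin n → ℝ)
    (hd : IsDecompFn F d)
    (x xh : Fin n → ℝ) (hx : x ≤ xh) (w wh : Fin m → ℝ) (hw : w ≤ wh) (i : Fin n) :
    d x w xh wh i ≤ sInf {v : ℝ | ∃ y : Fin n → ℝ, ∃ z : Fin m → ℝ,
        x ≤ y ∧ y ≤ xh ∧ y i = x i ∧ w ≤ z ∧ z ≤ wh ∧ v = F y z i} ∧
    sSup {v : ℝ | ∃ y : Fin n → ℝ, ∃ z : Fin m → ℝ,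
        x ≤ y ∧ y ≤ xh ∧ y i = xh i ∧ w ≤ z ∧ z ≤ wh ∧ v = F y z i} ≤ d xh wh x w i := by
  obtain ⟨hD1, hC1, hC2⟩ := hd
  constructor
  · apply le_csInf
    · exact ⟨F x w i, x, w, le_refl _, hx, rfl, le_refl _, hw, rfl⟩
    · rintro v ⟨y, z, hxy, hyxh, hyi, hwz, hzwh, rfl⟩
      have h1 : d x w xh wh i ≤ d y z xh wh i :=
        hC1 i x y xh w z wh (Or.inl ⟨hx, hw⟩) (Or.inl ⟨hyxh, hzwh⟩) hxy hyi.symm hwz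
      have h2 : d y z xh wh i ≤ d y z y z i :=
        hC2 i y y xh z z wh (Or.inl ⟨le_refl _, le_refl _⟩) (Or.inl ⟨hyxh, hzwh⟩) hyxh hzwh
      calc d x w xh wh i ≤ d y z xh wh i := h1
        _ ≤ d y z y z i := h2
        _ = F y z i := by rw [hD1]
  · apply csSup_le
    · refine ⟨F (Function.update x i (xh i)) w i, Function.update x i (xh i), w, ?_, ?_, ?_,
        le_refl _, hw, rfl⟩
      · intro j
        rcases eq_or_ne j i with rfl | hji
        · simp [hx j]
        · simp [Function.update_of_ne hji]
      · intro j
        rcases eq_or_ne j i with rfl | hji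
        · simp
        · simp [Function.update_of_ne hji, hx j]
      · simp
    · rintro v ⟨y, z, hxy, hyxh, hyi, hwz, hzwh, rfl⟩
      have h1 : d y z y z i ≤ d y z x w i :=
        hC2 i y x y z w z (Or.inr ⟨hxy, hwz⟩) (Or.inr ⟨le_refl _, le_refl _⟩) hxy hwz
      have h2 : d y z x w i ≤ d xh wh x w i :=
        hC1 i y xh x z wh w (Or.inr ⟨hxy, hwz⟩) (Or.inr ⟨hx, hw⟩) hyxh hyi hzwh
      calc F y z i = d y z y z i := by rw [hD1]
        _ ≤ d y z x w i := h1
        _ ≤ d xh wh x w i := h2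
end

section
/- Let F : ℝⁿ × ℝᵐ → ℝⁿ, let d be a Lipschitz continuous decomposition function for F, let w̲ ≤ w̄ in ℝᵐ, and let x̲, x̄ : [0,T] → ℝⁿ be differentiable and satisfy the embedding dynamics x̲′(t) = d(x̲(t),w̲,x̄(t),w̄) and x̄′(t) = d(x̄(t),w̄,x̲(t),w̲) for all t ∈ [0,T]. If x̲(0) ≤ x̄(0), then x̲(t) ≤ x̄(t) for all t ∈ [0,T]; that is, the set of ordered pairs is forward invariant for the embedding system. -/
open Set Filter Topology

lemma key_s6 {n m : ℕ} {F : (Fin n → ℝ) → (Fin m → ℝ) → Fin n → ℝ}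
    {d : (Fin n → ℝ) → (Fin m → ℝ) → (Fin n → ℝ) → (Fin m → ℝ) → Fin n → ℝ} {K : NNReal}
    (hd_lip : LipschitzWith K
      (fun p : (Fin n → ℝ) × (Fin m → ℝ) × (Fin n → ℝ) × (Fin m → ℝ) =>
        d p.1 p.2.1 p.2.2.1 p.2.2.2))
    (hd : IsDecompFn F d)
    {wl wu : Fin m → ℝ} (hw : wl ≤ wu) (a b : Fin n → ℝ) (i : Fin n) (hab : b i ≤ a i) :
    d a wl b wu i - d b wu a wl i ≤ 3 * K * (∑ j, max (a j - b j) 0) := by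
  set S : ℝ := ∑ j, max (a j - b j) 0 with hSdef
  have hS0 : 0 ≤ S := Finset.sum_nonneg fun j _ => le_max_right _ _
  have hjS : ∀ j, max (a j - b j) 0 ≤ S := fun j =>
    Finset.single_le_sum (f := fun j => max (a j - b j) 0)
      (fun j _ => le_max_right _ _) (Finset.mem_univ j)
  set p : Fin n → ℝ := a ⊓ b with hp
  set q : Fin n → ℝ := a ⊔ b with hq
  have hpq : p ≤ q := inf_le_sup
  have hpa : p ≤ a := inf_le_left
  have hpb : p ≤ b := inf_le_right
  have haq : a ≤ q := le_sup_left
  have hbq : b ≤ q := le_sup_right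
  -- distance helpers
  have hdap : dist a p ≤ S := by
    rw [dist_pi_le_iff hS0]
    intro j
    rw [Real.dist_eq]
    rcases le_total (a j) (b j) with h | h
    · have : p j = a j := min_eq_left h
      simpa [this] using hS0
    · have hpj : p j = b j := min_eq_right h
      rw [hpj, abs_of_nonneg (by linarith)]
      calc a j - b j ≤ max (a j - b j) 0 := le_max_left _ _
        _ ≤ S := hjS j
  have hdbq : dist b q ≤ S := by
    rw [dist_pi_le_iff hS0]
    intro j
    rw [Real.dist_eq]
    rcases le_total (a j) (b j) with h | h
    · have : q j = b j := max_eq_right h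
      simpa [this] using hS0
    · have hqj : q j = a j := max_eq_left h
      rw [hqj, abs_of_nonpos (by linarith), neg_sub]
      calc a j - b j ≤ max (a j - b j) 0 := le_max_left _ _
        _ ≤ S := hjS j
  have hlip : ∀ (x x' : Fin n → ℝ) (w w' : Fin m → ℝ) (y y' : Fin n → ℝ) (v v' : Fin m → ℝ),
      dist x x' ≤ S → dist w w' ≤ S → dist y y' ≤ S → dist v v' ≤ S →
      |d x w y v i - d x' w' y' v' i| ≤ K * S := by
    intro x x' w w' y y' v v' h1 h2 h3 h4
    have hd1 : dist (d x w y v i) (d x' w' y' v' i) ≤ dist (d x w y v) (d x' w' y' v') :=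
      dist_le_pi_dist _ _ i
    have hd2 := hd_lip.dist_le_mul (x, w, y, v) (x', w', y', v')
    rw [← Real.dist_eq]
    refine hd1.trans (hd2.trans ?_)
    have : dist ((x, w, y, v) : (Fin n → ℝ) × (Fin m → ℝ) × (Fin n → ℝ) × (Fin m → ℝ))
        (x', w', y', v') ≤ S := by
      simp only [Prod.dist_eq]
      exact max_le h1 (max_le h2 (max_le h3 h4))
    exact mul_le_mul_of_nonneg_left this K.coe_nonneg
  -- step 1 : d a wl b wu i ≤ d p wl q wu i + K*S
  have step1 : d a wl b wu i ≤ d p wl q wu i + K * S := by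
    have := hlip a p wl wl b q wu wu hdap (by simpa using hS0) hdbq (by simpa using hS0)
    have := abs_le.mp this
    linarith [this.2]
  -- step 2 : update at i
  set y : Fin n → ℝ := Function.update p i (q i) with hy
  have hyq : y ≤ q := by
    intro j
    by_cases hj : j = i
    · subst hj; simp [hy]
    · simp [hy, Function.update_of_ne hj]; exact hpq j
  have hyi : y i = q i := by simp [hy]
  have hdpy : dist p y ≤ S := by
    rw [dist_pi_le_iff hS0]
    intro j
    by_cases hj : j = i
    · rw [hj, Real.dist_eq, hyi]
      have hqi : q i = a i := max_eq_left hab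
      have hpi : p i = b i := min_eq_right hab
      rw [hpi, hqi, abs_of_nonpos (by linarith), neg_sub]
      calc a i - b i ≤ max (a i - b i) 0 := le_max_left _ _
        _ ≤ S := hjS i
    · have hyj : y j = p j := Function.update_of_ne hj _ _
      rw [Real.dist_eq, hyj]
      simpa using hS0
  have step2 : d p wl q wu i ≤ d y wl q wu i + K * S := by
    have := abs_le.mp (hlip p y wl wl q q wu wu hdpy (by simpa using hS0) (by simpa using hS0) (by simpa using hS0))
    linarith [this.2]
  -- step 3 : C1
  have step3 : d y wl q wu i ≤ d q wu q wu i := by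
    refine hd.2.1 i y q q wl wu wu ?_ ?_ hyq hyi hw
    · exact Or.inl ⟨hyq, hw⟩
    · exact Or.inl ⟨le_refl _, le_refl _⟩
  -- step 4 : C2
  have step4 : d q wu q wu i ≤ d q wu p wl i := by
    refine hd.2.2 i q p q wu wl wu ?_ ?_ hpq hw
    · exact Or.inr ⟨hpq, hw⟩
    · exact Or.inl ⟨le_refl _, le_refl _⟩
  -- step 5
  have step5 : d q wu p wl i ≤ d b wu a wl i + K * S := by
    have := abs_le.mp (hlip q b wu wu p a wl wl (by rw [dist_comm]; exact hdbq) (by simpa using hS0)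
      (by rw [dist_comm]; exact hdap) (by simpa using hS0))
    linarith [this.2]
  have : (3 : ℝ) * K * S = K * S + K * S + K * S := by ring
  linarith

/-- forward invariance of the ordered pairs for the embedding system:
if `d` is a Lipschitz decomposition function for `F`, `w̲ ≤ w̄`, and `(x̲,x̄)` solves the
embedding dynamics on `[0,T]` with `x̲(0) ≤ x̄(0)`, then `x̲(t) ≤ x̄(t)` for all `t ∈ [0,T]`. -/
theorem stmt6 {n m : ℕ} (F : (Fin n → ℝ) → (Fin m → ℝ) → Fin n → ℝ)
    (d : (Fin n → ℝ) → (Fin m → ℝ) → (Fin n → ℝ) → (Fin m → ℝ) → Fin n → ℝ) (K : NNReal)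
    (hd_lip : LipschitzWith K
      (fun p : (Fin n → ℝ) × (Fin m → ℝ) × (Fin n → ℝ) × (Fin m → ℝ) =>
        d p.1 p.2.1 p.2.2.1 p.2.2.2))
    (hd : IsDecompFn F d)
    (wl wu : Fin m → ℝ) (hw : wl ≤ wu) (T : ℝ)
    (xl xu : ℝ → Fin n → ℝ)
    (hxl : ∀ t ∈ Set.Icc (0 : ℝ) T, HasDerivAt xl (d (xl t) wl (xu t) wu) t)
    (hxu : ∀ t ∈ Set.Icc (0 : ℝ) T, HasDerivAt xu (d (xu t) wu (xl t) wl) t)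
    (h0 : xl 0 ≤ xu 0) :
    ∀ t ∈ Set.Icc (0 : ℝ) T, xl t ≤ xu t := by
  set f : ℝ → ℝ := fun t => ∑ j, max (xl t j - xu t j) 0 with hfdef
  have hf0 : ∀ t, 0 ≤ f t := fun t => Finset.sum_nonneg fun j _ => le_max_right _ _
  set D : ℝ → Fin n → ℝ :=
    fun t j => d (xl t) wl (xu t) wu j - d (xu t) wu (xl t) wl j with hDdef
  set g : ℝ → ℝ := fun t => ∑ j,
    (if 0 < xl t j - xu t j then D t j
     else if xl t j - xu t j = 0 then max (D t j) 0 else 0) with hgdef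
  set C : ℝ := 3 * K * n with hCdef
  -- componentwise derivatives
  have hder : ∀ t ∈ Set.Icc (0 : ℝ) T, ∀ j,
      HasDerivAt (fun s => xl s j - xu s j) (D t j) t := fun t ht j =>
    ((hasDerivAt_pi.mp (hxl t ht)) j).sub ((hasDerivAt_pi.mp (hxu t ht)) j)
  -- continuity of f on Icc
  have hcont : ContinuousOn f (Set.Icc 0 T) := by
    intro t ht
    refine ContinuousAt.continuousWithinAt ?_
    have : ∀ j : Fin n, ContinuousAt (fun s => max (xl s j - xu s j) 0) t := fun j =>
      ((hder t ht j).continuousAt).max continuousAt_const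
    exact tendsto_finset_sum _ fun j _ => this j
  -- bound : g t ≤ C * f t
  have hKf : ∀ t, (0:ℝ) ≤ 3 * K * f t := fun t =>
    mul_nonneg (mul_nonneg (by norm_num) K.coe_nonneg) (hf0 t)
  have hbound : ∀ t ∈ Set.Ico (0 : ℝ) T, g t ≤ C * f t + 0 := by
    intro t _
    rw [add_zero]
    have hterm : ∀ j ∈ Finset.univ,
        (if 0 < xl t j - xu t j then D t j
          else if xl t j - xu t j = 0 then max (D t j) 0 else 0) ≤ 3 * K * f t := by
      intro j _
      have hk : xu t j ≤ xl t j → D t j ≤ 3 * K * f t := fun hj =>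
        key_s6 hd_lip hd hw (xl t) (xu t) j hj
      split_ifs with h1 h2
      · exact hk (by linarith)
      · exact max_le (hk (by linarith)) (hKf t)
      · exact hKf t
    calc g t ≤ ∑ _j : Fin n, 3 * K * f t := Finset.sum_le_sum hterm
      _ = C * f t := by
          rw [Finset.sum_const, Finset.card_univ, Fintype.card_fin, nsmul_eq_mul, hCdef]
          ring
  -- slope convergence
  have hslope : ∀ t ∈ Set.Ico (0 : ℝ) T,
      Tendsto (fun z => (z - t)⁻¹ * (f z - f t)) (𝓝[>] t) (𝓝 (g t)) := by
    intro t ht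
    have ht' : t ∈ Set.Icc (0 : ℝ) T := ⟨ht.1, le_of_lt ht.2⟩
    have hsum : (fun z => (z - t)⁻¹ * (f z - f t)) = fun z => ∑ j,
        (z - t)⁻¹ * (max (xl z j - xu z j) 0 - max (xl t j - xu t j) 0) := by
      funext z
      rw [hfdef]
      simp only [← Finset.sum_sub_distrib, Finset.mul_sum]
    rw [hsum, hgdef]
    refine tendsto_finset_sum _ fun j _ => ?_
    have hdj := hder t ht' j
    have hbase : Tendsto
        (fun z => (z - t)⁻¹ * ((xl z j - xu z j) - (xl t j - xu t j)))
        (𝓝[>] t) (𝓝 (D t j)) := by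
      have h1 := hasDerivAt_iff_tendsto_slope.mp hdj
      have h2 : 𝓝[>] t ≤ 𝓝[≠] t :=
        nhdsWithin_mono _ fun z hz => ne_of_gt hz
      have h3 := h1.mono_left h2
      refine h3.congr fun z => ?_
      rw [slope_def_field, div_eq_inv_mul]
    rcases lt_trichotomy (xl t j - xu t j) 0 with hneg | hzero | hpos
    · rw [if_neg (by linarith), if_neg (by linarith)]
      have hev : ∀ᶠ z in 𝓝[>] t, xl z j - xu z j < 0 := by
        have hc : ContinuousAt (fun s => xl s j - xu s j) t := hdj.continuousAt
        have := hc.eventually_mem (Iio_mem_nhds hneg)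
        exact (this.filter_mono nhdsWithin_le_nhds).mono fun z hz => hz
      have heq : (fun z => (z - t)⁻¹ *
          (max (xl z j - xu z j) 0 - max (xl t j - xu t j) 0)) =ᶠ[𝓝[>] t]
          fun _ => (0 : ℝ) := by
        filter_upwards [hev] with z hz
        rw [max_eq_right hz.le, max_eq_right hneg.le]
        ring
      rw [tendsto_congr' heq]
      exact tendsto_const_nhds
    · rw [if_neg (by simp [hzero]), if_pos hzero]
      have heq : (fun z => (z - t)⁻¹ *
          (max (xl z j - xu z j) 0 - max (xl t j - xu t j) 0)) =ᶠ[𝓝[>] t]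
          fun z => max ((z - t)⁻¹ * ((xl z j - xu z j) - (xl t j - xu t j))) 0 := by
        filter_upwards [self_mem_nhdsWithin] with z hz
        have hzt : (0:ℝ) ≤ (z - t)⁻¹ := inv_nonneg.mpr (by simp only [mem_Ioi] at hz; linarith)
        rw [hzero, max_eq_right le_rfl, sub_zero, sub_zero, mul_max_of_nonneg _ _ hzt, mul_zero]
      rw [tendsto_congr' heq]
      exact hbase.max tendsto_const_nhds
    · rw [if_pos hpos]
      have hev : ∀ᶠ z in 𝓝[>] t, 0 < xl z j - xu z j := by
        have hc : ContinuousAt (fun s => xl s j - xu s j) t := hdj.continuousAt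
        have := hc.eventually_mem (Ioi_mem_nhds hpos)
        exact (this.filter_mono nhdsWithin_le_nhds).mono fun z hz => hz
      have heq : (fun z => (z - t)⁻¹ *
          (max (xl z j - xu z j) 0 - max (xl t j - xu t j) 0)) =ᶠ[𝓝[>] t]
          fun z => (z - t)⁻¹ * ((xl z j - xu z j) - (xl t j - xu t j)) := by
        filter_upwards [hev] with z hz
        rw [max_eq_left hz.le, max_eq_left hpos.le]
      rw [tendsto_congr' heq]
      exact hbase
  -- Grönwall
  have hgron := le_gronwallBound_of_liminf_deriv_right_le (f := f) (f' := g)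
    (δ := 0) (K := C) (ε := 0) (a := 0) (b := T) hcont
    (fun x hx r hr => ((hslope x hx).eventually_lt_const hr).frequently)
    (Finset.sum_nonpos fun j _ => max_le (by linarith [h0 j]) le_rfl) hbound
  intro t ht
  have hft := hgron t ht
  rw [sub_zero, gronwallBound_ε0_δ0] at hft
  intro i
  have h1 : max (xl t i - xu t i) 0 ≤ f t :=
    Finset.single_le_sum (f := fun j => max (xl t j - xu t j) 0)
      (fun j _ => le_max_right _ _) (Finset.mem_univ i)
  have h2 := le_max_left (xl t i - xu t i) 0
  have h3 : f t ≤ 0 := by simpa using hft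
  linarith
end

section
/- Let F : ℝⁿ × ℝᵐ → ℝⁿ be Lipschitz continuous, let d be a Lipschitz continuous decomposition function for F, and let w̲ ≤ w̄ in ℝᵐ. Let w : [0,T] → ℝᵐ be continuous with w̲ ≤ w(t) ≤ w̄ for all t, let φ : [0,T] → ℝⁿ be differentiable with φ′(t) = F(φ(t),w(t)), and let x̲, x̄ : [0,T] → ℝⁿ be differentiable with x̲′(t) = d(x̲(t),w̲,x̄(t),w̄) and x̄′(t) = d(x̄(t),w̄,x̲(t),w̲). If x̲(0) ≤ φ(0) ≤ x̄(0), then x̲(t) ≤ φ(t) ≤ x̄(t) for all t ∈ [0,T]. In particular, the time-T reachable set of ẋ = F(x,w) from the hyperrectangle [x̲(0),x̄(0)] under disturbances taking values in [w̲,w̄] is contained in [x̲(T),x̄(T)]. -/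
/-- over-approximation of reachable sets (Proposition 1): any trajectory of
`ẋ = F(x,w(t))` with disturbance in `[w̲,w̄]` starting in `[x̲(0),x̄(0)]` remains in the
hyperrectangle determined by the embedding-system trajectory: `x̲(t) ≤ φ(t) ≤ x̄(t)`. -/
theorem stmt7 {n m : ℕ} (F : (Fin n → ℝ) → (Fin m → ℝ) → Fin n → ℝ) (KF : NNReal)
    (hF_lip : LipschitzWith KF
      (fun p : (Fin n → ℝ) × (Fin m → ℝ) => F p.1 p.2))
    (d : (Fin n → ℝ) → (Fin m → ℝ) → (Fin n → ℝ) → (Fin m → ℝ) → Fin n → ℝ) (Kd : NNReal)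
    (hd_lip : LipschitzWith Kd
      (fun p : (Fin n → ℝ) × (Fin m → ℝ) × (Fin n → ℝ) × (Fin m → ℝ) =>
        d p.1 p.2.1 p.2.2.1 p.2.2.2))
    (hd : IsDecompFn F d)
    (wl wu : Fin m → ℝ) (hw : wl ≤ wu) (T : ℝ)
    (w : ℝ → Fin m → ℝ) (hw_cont : ContinuousOn w (Set.Icc (0 : ℝ) T))
    (hw_mem : ∀ t ∈ Set.Icc (0 : ℝ) T, wl ≤ w t ∧ w t ≤ wu)
    (φ : ℝ → Fin n → ℝ)
    (hφ : ∀ t ∈ Set.Icc (0 : ℝ) T, HasDerivAt φ (F (φ t) (w t)) t)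
    (xl xu : ℝ → Fin n → ℝ)
    (hxl : ∀ t ∈ Set.Icc (0 : ℝ) T, HasDerivAt xl (d (xl t) wl (xu t) wu) t)
    (hxu : ∀ t ∈ Set.Icc (0 : ℝ) T, HasDerivAt xu (d (xu t) wu (xl t) wl) t)
    (h0l : xl 0 ≤ φ 0) (h0u : φ 0 ≤ xu 0) :
    ∀ t ∈ Set.Icc (0 : ℝ) T, xl t ≤ φ t ∧ φ t ≤ xu t := by
  classical
  obtain ⟨hD1, hC1, hC2⟩ := hd
  -- the family of gap functions, including the constant 0
  set g : Option (Fin n × Bool) → ℝ → ℝ := fun j t =>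
    match j with
    | none => (0 : ℝ)
    | some (i, false) => xl t i - φ t i
    | some (i, true) => φ t i - xu t i with hgdef
  have hne : (Finset.univ : Finset (Option (Fin n × Bool))).Nonempty :=
    Finset.univ_nonempty
  set f : ℝ → ℝ := fun t => Finset.univ.sup' hne (fun j => g j t) with hfdef
  -- the derivative values
  set D : Option (Fin n × Bool) → ℝ → ℝ := fun j t =>
    match j with
    | none => (0 : ℝ)
    | some (i, false) => d (xl t) wl (xu t) wu i - F (φ t) (w t) i
    | some (i, true) => F (φ t) (w t) i - d (xu t) wu (xl t) wl i with hDdef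
  have hderiv : ∀ t ∈ Set.Icc (0:ℝ) T, ∀ j, HasDerivAt (g j) (D j t) t := by
    intro t ht j
    match j with
    | none => exact hasDerivAt_const t (0:ℝ)
    | some (i, false) =>
        exact ((hasDerivAt_pi.1 (hxl t ht)) i).sub ((hasDerivAt_pi.1 (hφ t ht)) i)
    | some (i, true) =>
        exact ((hasDerivAt_pi.1 (hφ t ht)) i).sub ((hasDerivAt_pi.1 (hxu t ht)) i)
  have hle_f : ∀ t j, g j t ≤ f t := fun t j =>
    Finset.le_sup' (fun j => g j t) (Finset.mem_univ j)
  have hfnonneg : ∀ t, 0 ≤ f t := fun t => hle_f t none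
  -- the key differential inequality at active indices
  have key : ∀ t ∈ Set.Icc (0:ℝ) T, ∀ j, g j t = f t → D j t ≤ (Kd : ℝ) * f t := by
    intro t ht j hact
    have hμ0 : 0 ≤ f t := hfnonneg t
    obtain ⟨hw1, hw2⟩ := hw_mem t ht
    have hgl : ∀ i, xl t i - φ t i ≤ f t := fun i => hle_f t (some (i, false))
    have hgu : ∀ i, φ t i - xu t i ≤ f t := fun i => hle_f t (some (i, true))
    match j with
    | none => exact mul_nonneg Kd.coe_nonneg hμ0
    | some (i, false) =>
      have hact' : xl t i - φ t i = f t := hact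
      set u : Fin n → ℝ := fun k => xl t k - f t with hudef
      set v : Fin n → ℝ := fun k => xu t k + f t with hvdef
      have hu_le : u ≤ φ t := fun k => by
        have := hgl k; simp only [hudef]; linarith
      have hui : u i = φ t i := by simp only [hudef]; linarith
      have hφv : φ t ≤ v := fun k => by
        have := hgu k; simp only [hvdef]; linarith
      have huv : u ≤ v := le_trans hu_le hφv
      have h1 : d u wl (φ t) (w t) i ≤ d (φ t) (w t) (φ t) (w t) i :=
        hC1 i u (φ t) (φ t) wl (w t) (w t) (Or.inl ⟨hu_le, hw1⟩)
          (Or.inl ⟨le_refl _, le_refl _⟩) hu_le hui hw1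
      have h2 : d u wl v wu i ≤ d u wl (φ t) (w t) i :=
        hC2 i u (φ t) v wl (w t) wu (Or.inl ⟨hu_le, hw1⟩) (Or.inl ⟨huv, hw⟩) hφv hw2
      have hF : d u wl v wu i ≤ F (φ t) (w t) i := by
        rw [← hD1 (φ t) (w t)]; exact h2.trans h1
      have hdist : dist ((xl t, wl, xu t, wu) :
          (Fin n → ℝ) × (Fin m → ℝ) × (Fin n → ℝ) × (Fin m → ℝ)) (u, wl, v, wu) ≤ f t := by
        rw [Prod.dist_eq]
        refine max_le ((dist_pi_le_iff hμ0).2 fun k => ?_) ?_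
        · simp [hudef, Real.dist_eq, abs_of_nonneg hμ0]
        rw [Prod.dist_eq]
        refine max_le (by simpa using hμ0) ?_
        rw [Prod.dist_eq]
        refine max_le ((dist_pi_le_iff hμ0).2 fun k => ?_) (by simpa using hμ0)
        simp [hvdef, Real.dist_eq, abs_of_nonneg hμ0]
      have hlip : dist (d (xl t) wl (xu t) wu i) (d u wl v wu i) ≤ (Kd : ℝ) * f t := by
        refine le_trans (dist_le_pi_dist (d (xl t) wl (xu t) wu) (d u wl v wu) i) ?_
        refine le_trans (hd_lip.dist_le_mul (xl t, wl, xu t, wu) (u, wl, v, wu)) ?_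
        exact mul_le_mul_of_nonneg_left hdist Kd.coe_nonneg
      have habs : d (xl t) wl (xu t) wu i - d u wl v wu i ≤ (Kd : ℝ) * f t :=
        le_trans (le_trans (le_abs_self _) (le_of_eq (Real.dist_eq _ _).symm)) hlip
      show d (xl t) wl (xu t) wu i - F (φ t) (w t) i ≤ (Kd : ℝ) * f t
      linarith
    | some (i, true) =>
      have hact' : φ t i - xu t i = f t := hact
      set u : Fin n → ℝ := fun k => xu t k + f t with hudef
      set v : Fin n → ℝ := fun k => xl t k - f t with hvdef
      have hu_ge : φ t ≤ u := fun k => by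
        have := hgu k; simp only [hudef]; linarith
      have hui : φ t i = u i := by simp only [hudef]; linarith
      have hvφ : v ≤ φ t := fun k => by
        have := hgl k; simp only [hvdef]; linarith
      have hvu : v ≤ u := le_trans hvφ hu_ge
      have h1 : d (φ t) (w t) (φ t) (w t) i ≤ d u wu (φ t) (w t) i :=
        hC1 i (φ t) u (φ t) (w t) wu (w t) (Or.inl ⟨le_refl _, le_refl _⟩)
          (Or.inr ⟨hu_ge, hw2⟩) hu_ge hui hw2
      have h2 : d u wu (φ t) (w t) i ≤ d u wu v wl i :=
        hC2 i u v (φ t) wu wl (w t) (Or.inr ⟨hvu, hw⟩) (Or.inr ⟨hu_ge, hw2⟩) hvφ hw1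
      have hF : F (φ t) (w t) i ≤ d u wu v wl i := by
        rw [← hD1 (φ t) (w t)]; exact h1.trans h2
      have hdist : dist ((u, wu, v, wl) :
          (Fin n → ℝ) × (Fin m → ℝ) × (Fin n → ℝ) × (Fin m → ℝ)) (xu t, wu, xl t, wl) ≤ f t := by
        rw [Prod.dist_eq]
        refine max_le ((dist_pi_le_iff hμ0).2 fun k => ?_) ?_
        · simp [hudef, Real.dist_eq, abs_of_nonneg hμ0]
        rw [Prod.dist_eq]
        refine max_le (by simpa using hμ0) ?_
        rw [Prod.dist_eq]
        refine max_le ((dist_pi_le_iff hμ0).2 fun k => ?_) (by simpa using hμ0)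
        simp [hvdef, Real.dist_eq, abs_of_nonneg hμ0]
      have hlip : dist (d u wu v wl i) (d (xu t) wu (xl t) wl i) ≤ (Kd : ℝ) * f t := by
        refine le_trans (dist_le_pi_dist (d u wu v wl) (d (xu t) wu (xl t) wl) i) ?_
        refine le_trans (hd_lip.dist_le_mul (u, wu, v, wl) (xu t, wu, xl t, wl)) ?_
        exact mul_le_mul_of_nonneg_left hdist Kd.coe_nonneg
      have habs : d u wu v wl i - d (xu t) wu (xl t) wl i ≤ (Kd : ℝ) * f t :=
        le_trans (le_trans (le_abs_self _) (le_of_eq (Real.dist_eq _ _).symm)) hlip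
      show F (φ t) (w t) i - d (xu t) wu (xl t) wl i ≤ (Kd : ℝ) * f t
      linarith
  -- continuity of f on [0, T]
  have hfc : ContinuousOn f (Set.Icc (0:ℝ) T) := fun t ht =>
    (ContinuousAt.finset_sup'_apply hne fun j _ =>
      (hderiv t ht j).continuousAt).continuousWithinAt
  -- the liminf-slope condition for Grönwall
  have hf' : ∀ t ∈ Set.Ico (0:ℝ) T, ∀ r, (Kd : ℝ) * f t < r →
      ∃ᶠ z in nhdsWithin t (Set.Ioi t), (z - t)⁻¹ * (f z - f t) < r := by
    intro t ht r hr
    have ht' : t ∈ Set.Icc (0:ℝ) T := Set.mem_Icc_of_Ico ht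
    apply Filter.Eventually.frequently
    have hforall : ∀ j, ∀ᶠ z in nhdsWithin t (Set.Ioi t), g j z - f t < r * (z - t) := by
      intro j
      rcases eq_or_lt_of_le (hle_f t j) with hact | hlt
      · -- active index: use the derivative bound
        have hDle : D j t ≤ (Kd : ℝ) * f t := key t ht' j hact
        have hslope : Filter.Tendsto (slope (g j) t) (nhdsWithin t (Set.Ioi t))
            (nhds (D j t)) :=
          (hasDerivAt_iff_tendsto_slope.1 (hderiv t ht' j)).mono_left
            (nhdsWithin_mono t fun z hz => ne_of_gt hz)
        filter_upwards [hslope.eventually_lt_const (lt_of_le_of_lt hDle hr),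
          self_mem_nhdsWithin] with z hz hz'
        rw [slope_def_field] at hz
        have hzt : 0 < z - t := sub_pos.2 hz'
        rw [div_lt_iff₀ hzt] at hz
        calc g j z - f t = g j z - g j t := by rw [hact]
          _ < r * (z - t) := hz
      · -- inactive index: continuity suffices
        have hc : Filter.Tendsto (fun z => g j z - r * (z - t)) (nhdsWithin t (Set.Ioi t))
            (nhds (g j t)) := by
          have h1 : ContinuousAt (fun z => g j z - r * (z - t)) t :=
            (hderiv t ht' j).continuousAt.sub
              (continuousAt_const.mul (continuousAt_id.sub continuousAt_const))
          have := h1.tendsto.mono_left (nhdsWithin_le_nhds (s := Set.Ioi t))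
          simpa using this
        filter_upwards [hc.eventually_lt_const hlt] with z hz
        linarith
    filter_upwards [Filter.eventually_all.2 hforall, self_mem_nhdsWithin] with z hz hz'
    have hzt : 0 < z - t := sub_pos.2 hz'
    have hfz : f z < f t + r * (z - t) :=
      (Finset.sup'_lt_iff hne).2 fun j _ => by linarith [hz j]
    rw [inv_mul_eq_div, div_lt_iff₀ hzt]
    linarith
  -- f 0 ≤ 0
  have hf0 : f 0 ≤ 0 := by
    refine Finset.sup'_le hne _ fun j _ => ?_
    match j with
    | none => exact le_refl 0
    | some (i, false) => have := h0l i; show xl 0 i - φ 0 i ≤ 0; linarith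
    | some (i, true) => have := h0u i; show φ 0 i - xu 0 i ≤ 0; linarith
  -- Grönwall
  have hmain := le_gronwallBound_of_liminf_deriv_right_le (f := f)
    (f' := fun t => (Kd : ℝ) * f t) (δ := 0) (K := (Kd : ℝ)) (ε := 0) (a := 0) (b := T)
    hfc hf' hf0 (fun x _ => by simp)
  intro t ht
  have hft : f t ≤ 0 := by
    have := hmain t ht
    rwa [gronwallBound_ε0_δ0] at this
  constructor
  · intro i
    have h := (hle_f t (some (i, false))).trans hft
    have : xl t i - φ t i ≤ 0 := h
    linarith
  · intro i
    have h := (hle_f t (some (i, true))).trans hft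
    have : φ t i - xu t i ≤ 0 := h
    linarith
end

section
/- Let F : ℝⁿ × ℝᵐ → ℝⁿ, let d be a Lipschitz continuous decomposition function for F, and let w̲ ≤ w̄ in ℝᵐ. Let (x̲,x̄) and (y̲,ȳ) be two differentiable solutions on [0,T] of the embedding dynamics x̲′ = d(x̲,w̲,x̄,w̄), x̄′ = d(x̄,w̄,x̲,w̲) (and the same equations for (y̲,ȳ)). If x̲(0) ≤ y̲(0) ≤ ȳ(0) ≤ x̄(0), then x̲(t) ≤ y̲(t), y̲(t) ≤ ȳ(t), and ȳ(t) ≤ x̄(t) for all t ∈ [0,T]; in particular [y̲(t),ȳ(t)] ⊆ [x̲(t),x̄(t)] for all t. That is, the embedding system is monotone with respect to the southeast order. -/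
open Set Filter Topology

set_option maxHeartbeats 2000000

set_option maxHeartbeats 1000000 in
lemma kamke_max_family {ι : Type*} [Fintype ι] (g g' : ι → ℝ → ℝ) (T K' : ℝ) (hK' : 0 ≤ K')
    (hg : ∀ j, ∀ t ∈ Icc (0:ℝ) T, HasDerivAt (g j) (g' j t) t)
    (h0 : ∀ j, g j 0 ≤ 0)
    (hKamke : ∀ j, ∀ t ∈ Ico (0:ℝ) T, ∀ μ : ℝ, 0 ≤ μ → (∀ j', g j' t ≤ μ) → g j t = μ →
      g' j t ≤ K' * μ) :
    ∀ t ∈ Icc (0:ℝ) T, ∀ j, g j t ≤ 0 := by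
  classical
  set v : ℝ → ι → ℝ := fun t j => max (g j t) 0 with hv
  set M : ℝ → ℝ := fun t => ‖v t‖ with hM
  have hMnonneg : ∀ t, 0 ≤ M t := fun t => norm_nonneg _
  have hle : ∀ t j, g j t ≤ M t := by
    intro t j
    calc g j t ≤ v t j := le_max_left _ _
    _ ≤ |v t j| := le_abs_self _
    _ ≤ ‖v t‖ := by simpa [Real.norm_eq_abs] using norm_le_pi_norm (v t) j
  have hvnn : ∀ t j, 0 ≤ v t j := fun t j => le_max_right _ _
  have hcont : ∀ j, ContinuousOn (g j) (Icc 0 T) := fun j t ht =>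
    ((hg j t ht).continuousAt).continuousWithinAt
  have hMcont : ContinuousOn M (Icc 0 T) := by
    apply ContinuousOn.norm
    apply continuousOn_pi.2
    intro j
    intro t ht
    exact ((hcont j) t ht).max continuousWithinAt_const
  have key : ∀ t ∈ Icc (0:ℝ) T, M t ≤ gronwallBound 0 K' 0 (t - 0) := by
    apply le_gronwallBound_of_liminf_deriv_right_le (f' := fun t => K' * M t) hMcont
    · intro t ht r hr
      have htT : t ∈ Icc (0:ℝ) T := Ico_subset_Icc_self ht
      set r' : ℝ := (K' * M t + r) / 2 with hr'
      have h1 : K' * M t < r' := by rw [hr']; linarith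
      have h2 : r' < r := by rw [hr']; linarith
      have h3 : 0 < r' := lt_of_le_of_lt (mul_nonneg hK' (hMnonneg t)) h1
      have claim : ∀ j, ∀ᶠ z in 𝓝[>] t, v z j ≤ M t + r' * (z - t) := by
        intro j
        rcases eq_or_lt_of_le (hle t j) with hact | hlt
        · have hd : g' j t ≤ K' * M t :=
            hKamke j t ht (M t) (hMnonneg t) (fun j' => hle t j') hact
          have hslope : Tendsto (slope (g j) t) (𝓝[≠] t) (𝓝 (g' j t)) :=
            hasDerivAt_iff_tendsto_slope.1 (hg j t htT)
          have hs2 : ∀ᶠ z in 𝓝[≠] t, slope (g j) t z < r' :=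
            hslope.eventually (Filter.Tendsto.eventually_lt_const (lt_of_le_of_lt hd h1) tendsto_id)
          have hs3 : ∀ᶠ z in 𝓝[>] t, slope (g j) t z < r' :=
            hs2.filter_mono (nhdsWithin_mono t (fun z hz => ne_of_gt hz))
          filter_upwards [hs3, self_mem_nhdsWithin] with z hz hz'
          have hzt : 0 < z - t := sub_pos.2 hz'
          have : (g j z - g j t) / (z - t) < r' := by
            simpa [slope_def_field, div_eq_inv_mul] using hz
          have hgz : g j z < g j t + r' * (z - t) := by
            rw [div_lt_iff₀ hzt] at this; linarith
          have hrhs : 0 ≤ M t + r' * (z - t) :=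
            add_nonneg (hMnonneg t) (le_of_lt (mul_pos h3 hzt))
          have : v z j ≤ max (M t + r' * (z - t)) 0 :=
            max_le_max (le_of_lt (lt_of_lt_of_le hgz (by linarith [hact.le]))) le_rfl
          simpa [max_eq_left hrhs] using this
        · have hcj : ContinuousAt (fun z => v z j) t :=
            ((hg j t htT).continuousAt).max continuousAt_const
          have hvle : v t j ≤ M t := by
            calc v t j ≤ |v t j| := le_abs_self _
            _ ≤ ‖v t‖ := by simpa [Real.norm_eq_abs] using norm_le_pi_norm (v t) j
          rcases lt_or_eq_of_le hvle with hvlt | hveq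
          · have := hcj.eventually (Filter.Tendsto.eventually_lt_const hvlt tendsto_id)
            have h5 : ∀ᶠ z in 𝓝[>] t, v z j < M t := this.filter_mono nhdsWithin_le_nhds
            filter_upwards [h5, self_mem_nhdsWithin] with z hz hz'
            have : 0 ≤ r' * (z - t) := le_of_lt (mul_pos h3 (sub_pos.2 hz'))
            linarith
          · have hv0 : v t j = 0 := by
              rcases max_cases (g j t) 0 with ⟨h, _⟩ | ⟨h, _⟩
              · exfalso; rw [hv] at hveq; simp only at hveq
                rw [h] at hveq; exact absurd hveq (ne_of_lt hlt)
              · exact h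
            have hM0 : M t = 0 := by rw [← hveq, hv0]
            have hgneg : g j t < 0 := by rw [hM0] at hlt; exact hlt
            have := ((hg j t htT).continuousAt).eventually
              (Filter.Tendsto.eventually_lt_const hgneg tendsto_id)
            have h5 : ∀ᶠ z in 𝓝[>] t, g j z < 0 := this.filter_mono nhdsWithin_le_nhds
            filter_upwards [h5, self_mem_nhdsWithin] with z hz hz'
            have h6 : v z j = 0 := max_eq_right hz.le
            have : 0 ≤ r' * (z - t) := le_of_lt (mul_pos h3 (sub_pos.2 hz'))
            rw [h6]; linarith [hMnonneg t]
      have hall : ∀ᶠ z in 𝓝[>] t, ∀ j, v z j ≤ M t + r' * (z - t) := eventually_all.2 claim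
      apply Frequently.mono _ (fun z h => h)
      apply Eventually.frequently
      filter_upwards [hall, self_mem_nhdsWithin] with z hz hz'
      have hzt : 0 < z - t := sub_pos.2 hz'
      have hrhs : 0 ≤ M t + r' * (z - t) :=
        add_nonneg (hMnonneg t) (le_of_lt (mul_pos h3 hzt))
      have hMz : M z ≤ M t + r' * (z - t) := by
        apply pi_norm_le_iff_of_nonneg hrhs |>.2
        intro j
        rw [Real.norm_eq_abs, abs_of_nonneg (hvnn z j)]
        exact hz j
      calc (z - t)⁻¹ * (M z - M t) ≤ (z - t)⁻¹ * (r' * (z - t)) := by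
            apply mul_le_mul_of_nonneg_left (by linarith) (le_of_lt (inv_pos.2 hzt))
      _ = r' := by field_simp
      _ < r := h2
    · simp only [hM]
      have : ∀ j, v 0 j = 0 := fun j => max_eq_right (h0 j)
      have : v 0 = 0 := funext this
      rw [this]; simp
    · intro t _; simp
  intro t ht j
  have := key t ht
  rw [gronwallBound_ε0, zero_mul] at this
  have hM0 : M t = 0 := le_antisymm this (hMnonneg t)
  calc g j t ≤ M t := hle t j
  _ = 0 := hM0



/-- the embedding system is monotone with respect to the southeast order:
for two embedding-system solutions `(x̲,x̄)` and `(y̲,ȳ)` with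
`x̲(0) ≤ y̲(0) ≤ ȳ(0) ≤ x̄(0)`, we have `x̲(t) ≤ y̲(t)`, `y̲(t) ≤ ȳ(t)` and `ȳ(t) ≤ x̄(t)`
for all `t ∈ [0,T]`. -/
theorem stmt8 {n m : ℕ} (F : (Fin n → ℝ) → (Fin m → ℝ) → Fin n → ℝ)
    (d : (Fin n → ℝ) → (Fin m → ℝ) → (Fin n → ℝ) → (Fin m → ℝ) → Fin n → ℝ) (K : NNReal)
    (hd_lip : LipschitzWith K
      (fun p : (Fin n → ℝ) × (Fin m → ℝ) × (Fin n → ℝ) × (Fin m → ℝ) =>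
        d p.1 p.2.1 p.2.2.1 p.2.2.2))
    (hd : IsDecompFn F d)
    (wl wu : Fin m → ℝ) (hw : wl ≤ wu) (T : ℝ)
    (xl xu yl yu : ℝ → Fin n → ℝ)
    (hxl : ∀ t ∈ Set.Icc (0 : ℝ) T, HasDerivAt xl (d (xl t) wl (xu t) wu) t)
    (hxu : ∀ t ∈ Set.Icc (0 : ℝ) T, HasDerivAt xu (d (xu t) wu (xl t) wl) t)
    (hyl : ∀ t ∈ Set.Icc (0 : ℝ) T, HasDerivAt yl (d (yl t) wl (yu t) wu) t)
    (hyu : ∀ t ∈ Set.Icc (0 : ℝ) T, HasDerivAt yu (d (yu t) wu (yl t) wl) t)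
    (h1 : xl 0 ≤ yl 0) (h2 : yl 0 ≤ yu 0) (h3 : yu 0 ≤ xu 0) :
    ∀ t ∈ Set.Icc (0 : ℝ) T, xl t ≤ yl t ∧ yl t ≤ yu t ∧ yu t ≤ xu t := by
  classical
  obtain ⟨hD1, hC1, hC2⟩ := hd
  -- component Lipschitz estimate
  have hlipc : ∀ (x₁ x₂ xh₁ xh₂ : Fin n → ℝ) (w₁ w₂ wh₁ wh₂ : Fin m → ℝ) (i : Fin n) (c : ℝ),
      dist x₁ x₂ ≤ c → dist w₁ w₂ ≤ c → dist xh₁ xh₂ ≤ c → dist wh₁ wh₂ ≤ c →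
      d x₁ w₁ xh₁ wh₁ i ≤ d x₂ w₂ xh₂ wh₂ i + K * c := by
    intro x₁ x₂ xh₁ xh₂ w₁ w₂ wh₁ wh₂ i c hd1 hd2 hd3 hd4
    have hpq : dist ((x₁, w₁, xh₁, wh₁) : (Fin n → ℝ) × (Fin m → ℝ) × (Fin n → ℝ) × (Fin m → ℝ))
        (x₂, w₂, xh₂, wh₂) ≤ c := by
      simp only [Prod.dist_eq]
      exact max_le hd1 (max_le hd2 (max_le hd3 hd4))
    have hKd : dist (d x₁ w₁ xh₁ wh₁) (d x₂ w₂ xh₂ wh₂) ≤ K * c := by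
      calc dist (d x₁ w₁ xh₁ wh₁) (d x₂ w₂ xh₂ wh₂)
          ≤ K * dist ((x₁, w₁, xh₁, wh₁) : (Fin n → ℝ) × (Fin m → ℝ) × (Fin n → ℝ) × (Fin m → ℝ))
            (x₂, w₂, xh₂, wh₂) := by
              simpa using hd_lip.dist_le_mul (x₁, w₁, xh₁, wh₁) (x₂, w₂, xh₂, wh₂)
        _ ≤ K * c := mul_le_mul_of_nonneg_left hpq (NNReal.coe_nonneg K)
    have hcomp : dist (d x₁ w₁ xh₁ wh₁ i) (d x₂ w₂ xh₂ wh₂ i) ≤ K * c :=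
      le_trans (dist_le_pi_dist _ _ i) hKd
    rw [Real.dist_eq] at hcomp
    linarith [(abs_le.1 hcomp).2]
  -- distance of a shift
  have hshift : ∀ (x : Fin n → ℝ) (c b : ℝ), |c| ≤ b → dist (fun k => x k + c) x ≤ b := by
    intro x c b hb
    rw [dist_pi_le_iff (le_trans (abs_nonneg c) hb)]
    intro k; rw [Real.dist_eq]; simpa using hb
  have hshift' : ∀ (x : Fin n → ℝ) (c b : ℝ), |c| ≤ b → dist x (fun k => x k + c) ≤ b := by
    intro x c b hb; rw [dist_comm]; exact hshift x c b hb
  have hself : ∀ (k : ℕ) (x : Fin k → ℝ) (b : ℝ), 0 ≤ b → dist x x ≤ b := by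
    intro k x b hb; simpa [dist_self] using hb
  -- component derivative extraction
  have hcompd : ∀ (f : ℝ → Fin n → ℝ) (f' : Fin n → ℝ) (t : ℝ) (i : Fin n),
      HasDerivAt f f' t → HasDerivAt (fun s => f s i) (f' i) t := fun f f' t i h =>
    (ContinuousLinearMap.proj (R := ℝ) (φ := fun _ : Fin n => ℝ) i).hasFDerivAt.comp_hasDerivAt t h
  have key := kamke_max_family (ι := Fin n ⊕ (Fin n ⊕ Fin n))
    (fun p t => Sum.elim (fun i => xl t i - yl t i)
      (Sum.elim (fun i => yl t i - yu t i) (fun i => yu t i - xu t i)) p)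
    (fun p t => Sum.elim (fun i => d (xl t) wl (xu t) wu i - d (yl t) wl (yu t) wu i)
      (Sum.elim (fun i => d (yl t) wl (yu t) wu i - d (yu t) wu (yl t) wl i)
        (fun i => d (yu t) wu (yl t) wl i - d (xu t) wu (xl t) wl i)) p)
    T (6 * K) (by positivity)
    (by
      rintro (i | i | i) t ht
      · have := ((hcompd _ _ t i (hxl t ht)).sub (hcompd _ _ t i (hyl t ht))); exact this
      · have := ((hcompd _ _ t i (hyl t ht)).sub (hcompd _ _ t i (hyu t ht))); exact this
      · have := ((hcompd _ _ t i (hyu t ht)).sub (hcompd _ _ t i (hxu t ht))); exact this)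
    (by
      rintro (i | i | i)
      · simpa using sub_nonpos.2 (h1 i)
      · simpa using sub_nonpos.2 (h2 i)
      · simpa using sub_nonpos.2 (h3 i))
    (by
      rintro j t ht μ hμ hall hact
      have A1 : ∀ k, xl t k ≤ yl t k + μ := by
        intro k; have := hall (Sum.inl k); simp only [Sum.elim_inl] at this; linarith
      have A2 : ∀ k, yl t k ≤ yu t k + μ := by
        intro k; have := hall (Sum.inr (Sum.inl k))
        simp only [Sum.elim_inr, Sum.elim_inl] at this; linarith
      have A3 : ∀ k, yu t k ≤ xu t k + μ := by
        intro k; have := hall (Sum.inr (Sum.inr k))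
        simp only [Sum.elim_inr] at this; linarith
      have hμ3 : (0:ℝ) ≤ 3 * μ := by linarith
      have hsix : (6:ℝ) * K * μ = K * (3 * μ) + K * (3 * μ) := by ring
      obtain i | i | i := j
      · -- case xl - yl
        simp only [Sum.elim_inl] at hact ⊢
        have step1 : d (xl t) wl (xu t) wu i ≤
            d (xl t) wl (fun k => xu t k + 3 * μ) wu i + K * (3 * μ) :=
          hlipc _ _ _ _ _ _ _ _ i (3 * μ) (hself n _ _ hμ3)
            (hself m _ _ hμ3) (hshift' _ _ _ (by rw [abs_of_nonneg hμ3])) (hself m _ _ hμ3)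
        have hT1 : InT (xl t) wl (fun k => xu t k + 3 * μ) wu := by
          left; constructor
          · intro k
            have := A1 k; have := A2 k; have := A3 k
            simp only; linarith
          · exact hw
        have hT2 : InT (fun k => yl t k + μ) wl (fun k => xu t k + 3 * μ) wu := by
          left; constructor
          · intro k; have := A2 k; have := A3 k; simp only; linarith
          · exact hw
        have step2 : d (xl t) wl (fun k => xu t k + 3 * μ) wu i ≤
            d (fun k => yl t k + μ) wl (fun k => xu t k + 3 * μ) wu i := by
          apply hC1 i _ _ _ _ _ _ hT1 hT2
          · intro k; have := A1 k; simp only; linarith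
          · show xl t i = yl t i + μ; linarith
          · exact le_rfl
        have hT3 : InT (fun k => yl t k + μ) wl (fun k => yu t k + 2 * μ) wu := by
          left; constructor
          · intro k; have := A2 k; simp only; linarith
          · exact hw
        have step3 : d (fun k => yl t k + μ) wl (fun k => xu t k + 3 * μ) wu i ≤
            d (fun k => yl t k + μ) wl (fun k => yu t k + 2 * μ) wu i := by
          apply hC2 i _ _ _ _ _ _ hT3 hT2
          · intro k; have := A3 k; simp only; linarith
          · exact le_rfl
        have step4 : d (fun k => yl t k + μ) wl (fun k => yu t k + 2 * μ) wu i ≤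
            d (yl t) wl (yu t) wu i + K * (3 * μ) :=
          hlipc _ _ _ _ _ _ _ _ i (3 * μ)
            (hshift _ _ _ (by rw [abs_of_nonneg hμ]; linarith))
            (hself m _ _ hμ3)
            (hshift _ _ _ (by rw [abs_of_nonneg (by linarith : (0:ℝ) ≤ 2*μ)]; linarith))
            (hself m _ _ hμ3)
        linarith [step1, step2, step3, step4]
      · -- case yl - yu
        simp only [Sum.elim_inr, Sum.elim_inl] at hact ⊢
        have step1 : d (yl t) wl (yu t) wu i ≤
            d (yl t) wl (fun k => yu t k + μ) wu i + K * (3 * μ) :=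
          hlipc _ _ _ _ _ _ _ _ i (3 * μ) (hself n _ _ hμ3) (hself m _ _ hμ3)
            (hshift' _ _ _ (by rw [abs_of_nonneg hμ]; linarith)) (hself m _ _ hμ3)
        have hT1 : InT (yl t) wl (yl t) wl := by left; exact ⟨le_rfl, le_rfl⟩
        have hT2 : InT (yl t) wl (fun k => yu t k + μ) wu := by
          left; constructor
          · intro k; have := A2 k; simp only; linarith
          · exact hw
        have step2 : d (yl t) wl (fun k => yu t k + μ) wu i ≤ d (yl t) wl (yl t) wl i := by
          apply hC2 i _ _ _ _ _ _ hT1 hT2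
          · intro k; have := A2 k; simp only; linarith
          · exact hw
        have hT3 : InT (fun k => yu t k + μ) wu (yl t) wl := by
          right; constructor
          · intro k; have := A2 k; simp only; linarith
          · exact hw
        have step3 : d (yl t) wl (yl t) wl i ≤ d (fun k => yu t k + μ) wu (yl t) wl i := by
          apply hC1 i _ _ _ _ _ _ hT1 hT3
          · intro k; have := A2 k; simp only; linarith
          · show yl t i = yu t i + μ; linarith
          · exact hw
        have step4 : d (fun k => yu t k + μ) wu (yl t) wl i ≤
            d (yu t) wu (yl t) wl i + K * (3 * μ) :=
          hlipc _ _ _ _ _ _ _ _ i (3 * μ)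
            (hshift _ _ _ (by rw [abs_of_nonneg hμ]; linarith)) (hself m _ _ hμ3)
            (hself n _ _ hμ3) (hself m _ _ hμ3)
        linarith [step1, step2, step3, step4]
      · -- case yu - xu
        simp only [Sum.elim_inr] at hact ⊢
        have step1 : d (yu t) wu (yl t) wl i ≤
            d (fun k => yu t k + (-μ)) wu (fun k => yl t k + (-(2*μ))) wl i + K * (3 * μ) :=
          hlipc _ _ _ _ _ _ _ _ i (3 * μ)
            (hshift' _ _ _ (by rw [abs_neg, abs_of_nonneg hμ]; linarith)) (hself m _ _ hμ3)
            (hshift' _ _ _ (by rw [abs_neg, abs_of_nonneg (by linarith : (0:ℝ) ≤ 2*μ)]; linarith))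
            (hself m _ _ hμ3)
        have hT1 : InT (fun k => yu t k + (-μ)) wu (fun k => yl t k + (-(2*μ))) wl := by
          right; constructor
          · intro k; have := A2 k; simp only; linarith
          · exact hw
        have hT2 : InT (fun k => yu t k + (-μ)) wu (fun k => xl t k + (-(3*μ))) wl := by
          right; constructor
          · intro k; have := A1 k; have := A2 k; simp only; linarith
          · exact hw
        have step2 : d (fun k => yu t k + (-μ)) wu (fun k => yl t k + (-(2*μ))) wl i ≤
            d (fun k => yu t k + (-μ)) wu (fun k => xl t k + (-(3*μ))) wl i := by
          apply hC2 i _ _ _ _ _ _ hT2 hT1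
          · intro k; have := A1 k; simp only; linarith
          · exact le_rfl
        have hT3 : InT (xu t) wu (fun k => xl t k + (-(3*μ))) wl := by
          right; constructor
          · intro k; have := A1 k; have := A2 k; have := A3 k; simp only; linarith
          · exact hw
        have step3 : d (fun k => yu t k + (-μ)) wu (fun k => xl t k + (-(3*μ))) wl i ≤
            d (xu t) wu (fun k => xl t k + (-(3*μ))) wl i := by
          apply hC1 i _ _ _ _ _ _ hT2 hT3
          · intro k; have := A3 k; simp only; linarith
          · show yu t i + (-μ) = xu t i; linarith
          · exact le_rfl
        have step4 : d (xu t) wu (fun k => xl t k + (-(3*μ))) wl i ≤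
            d (xu t) wu (xl t) wl i + K * (3 * μ) :=
          hlipc _ _ _ _ _ _ _ _ i (3 * μ) (hself n _ _ hμ3) (hself m _ _ hμ3)
            (hshift _ _ _ (by rw [abs_neg, abs_of_nonneg hμ3])) (hself m _ _ hμ3)
        linarith [step1, step2, step3, step4])
  intro t ht
  refine ⟨fun k => ?_, fun k => ?_, fun k => ?_⟩
  · have := key t ht (Sum.inl k); simp only [Sum.elim_inl] at this; linarith
  · have := key t ht (Sum.inr (Sum.inl k)); simp only [Sum.elim_inr, Sum.elim_inl] at this
    linarith
  · have := key t ht (Sum.inr (Sum.inr k)); simp only [Sum.elim_inr] at this; linarith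
end

section
/- Let F : ℝⁿ × ℝᵐ → ℝⁿ and let d and δ both be Lipschitz continuous decomposition functions for F such that for all x ≤ x̂ in ℝⁿ and w ≤ ŵ in ℝᵐ, d(x,w,x̂,ŵ) ≤ δ(x,w,x̂,ŵ) and δ(x̂,ŵ,x,w) ≤ d(x̂,ŵ,x,w) componentwise (δ is tight). Fix w̲ ≤ w̄ in ℝᵐ and x̲₀ ≤ x̄₀ in ℝⁿ, and let (x̲,x̄) and (y̲,ȳ) be differentiable solutions on [0,T] of the embedding dynamics relative to d and to δ respectively, both with initial condition (x̲₀,x̄₀). Then x̲(t) ≤ y̲(t) and ȳ(t) ≤ x̄(t) for all t ∈ [0,T]; equivalently, [y̲(t),ȳ(t)] ⊆ [x̲(t),x̄(t)] for all t, so the tight decomposition function yields tighter hyperrectangular reachable-set approximations. -/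
open Set Filter Real Topology

lemma gronwall_max {ι : Type*} [Fintype ι] (g g' : ι → ℝ → ℝ) {T C ε : ℝ} (hε : 0 < ε)
    (hderiv : ∀ j, ∀ t ∈ Set.Icc (0:ℝ) T, HasDerivAt (g j) (g' j t) t)
    (h0 : ∀ j, g j 0 ≤ 0)
    (hbound : ∀ t ∈ Set.Ico (0:ℝ) T, (∀ j, g j t ≤ ε * Real.exp (C * t)) →
        ∀ j, g j t = ε * Real.exp (C * t) → g' j t < C * (ε * Real.exp (C * t))) :
    ∀ t ∈ Set.Icc (0:ℝ) T, ∀ j, g j t ≤ ε * Real.exp (C * t) := by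
  rcases isEmpty_or_nonempty ι with h | h
  · intro t ht j; exact (IsEmpty.false j).elim
  set B : ℝ → ℝ := fun t => ε * Real.exp (C * t) with hB
  set B' : ℝ → ℝ := fun t => C * (ε * Real.exp (C * t)) with hB'
  have hBd : ∀ t, HasDerivAt B (B' t) t := by
    intro t
    have : HasDerivAt (fun t : ℝ => ε * Real.exp (C * t))
        (ε * (Real.exp (C * t) * C)) t :=
      by simpa using (((hasDerivAt_id t).const_mul C).exp).const_mul ε
    convert this using 1
    simp only [hB']; ring
  set f : ℝ → ℝ := fun t => Finset.univ.sup' Finset.univ_nonempty (fun j => g j t) with hf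
  have hle : ∀ t j, g j t ≤ f t := fun t j =>
    Finset.le_sup' (f := fun j => g j t) (Finset.mem_univ j)
  have hex : ∀ t, ∃ j, g j t = f t := by
    intro t
    obtain ⟨j, _, hj⟩ := Finset.exists_mem_eq_sup' (Finset.univ_nonempty (α := ι))
      (fun j => g j t)
    exact ⟨j, hj.symm⟩
  have hne : ∀ t, (Finset.univ.filter (fun j => g j t = f t)).Nonempty := by
    intro t
    obtain ⟨j, hj⟩ := hex t
    exact ⟨j, Finset.mem_filter.2 ⟨Finset.mem_univ j, hj⟩⟩
  set f' : ℝ → ℝ := fun t =>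
    (Finset.univ.filter (fun j => g j t = f t)).sup' (hne t) (fun j => g' j t) with hf'
  have hcont : ContinuousOn f (Set.Icc 0 T) := by
    intro t ht
    exact (ContinuousAt.finset_sup'_apply Finset.univ_nonempty
      (fun j _ => (hderiv j t ht).continuousAt)).continuousWithinAt
  have key : ∀ ⦃t⦄, t ∈ Set.Icc (0:ℝ) T → f t ≤ B t := by
    refine image_le_of_liminf_slope_right_lt_deriv_boundary (f' := f') hcont ?_ ?_ hBd ?_
    · -- slope estimate
      intro x hx r hr
      have hxIcc : x ∈ Set.Icc (0:ℝ) T := Ico_subset_Icc_self hx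
      have hev : ∀ j : ι, ∀ᶠ z in 𝓝[>] x,
          (g j x = f x → slope (g j) x z < r) ∧
          (g j x ≠ f x → g j z < f x + r * (z - x)) := by
        intro j
        refine Filter.Eventually.and ?_ ?_
        · by_cases hj : g j x = f x
          · have hmem : j ∈ Finset.univ.filter (fun k => g k x = f x) :=
              Finset.mem_filter.2 ⟨Finset.mem_univ j, hj⟩
            have hle' : g' j x ≤ f' x := Finset.le_sup' (f := fun k => g' k x) hmem
            have hder := hderiv j x hxIcc
            have htend : Filter.Tendsto (slope (g j) x) (𝓝[≠] x) (𝓝 (g' j x)) :=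
              hasDerivAt_iff_tendsto_slope.1 hder
            have hev' : ∀ᶠ z in 𝓝[≠] x, slope (g j) x z < r :=
              htend.eventually_lt_const (lt_of_le_of_lt hle' hr)
            have hsub : 𝓝[>] x ≤ 𝓝[≠] x :=
              nhdsWithin_mono x fun z hz => (LT.lt.ne' hz : z ≠ x)
            exact (hev'.filter_mono hsub).mono fun z hz _ => hz
          · exact Filter.Eventually.of_forall fun z h => absurd h hj
        · by_cases hj : g j x = f x
          · exact Filter.Eventually.of_forall fun z h => absurd hj h
          · have hlt : g j x < f x := lt_of_le_of_ne (hle x j) hj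
            have hc : ContinuousAt (fun z => g j z - r * (z - x)) x := by
              exact ((hderiv j x hxIcc).continuousAt).sub (by fun_prop)
            have : ∀ᶠ z in 𝓝 x, g j z - r * (z - x) < f x := by
              have := hc.tendsto.eventually_lt_const
                (show (fun z => g j z - r * (z - x)) x < f x by simpa using hlt)
              exact this
            exact (this.filter_mono nhdsWithin_le_nhds).mono fun z hz _ => by linarith
      have hall : ∀ᶠ z in 𝓝[>] x, ∀ j : ι,
          (g j x = f x → slope (g j) x z < r) ∧
          (g j x ≠ f x → g j z < f x + r * (z - x)) := eventually_all.2 hev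
      have hmem : ∀ᶠ z in 𝓝[>] x, z ∈ Set.Ioi x := eventually_mem_nhdsWithin
      refine ((hall.and hmem).mono ?_).frequently
      rintro z ⟨hz, hzx⟩
      obtain ⟨j0, hj0⟩ := hex z
      have hzx' : (0:ℝ) < z - x := sub_pos.2 hzx
      by_cases hc0 : g j0 x = f x
      · have h1 := (hz j0).1 hc0
        have : slope f x z = slope (g j0) x z := by
          rw [slope_def_field, slope_def_field, hj0, hc0]
        rwa [this]
      · have h2 := (hz j0).2 hc0
        rw [slope_def_field, div_lt_iff₀ hzx']
        rw [← hj0]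
        linarith
    · -- f 0 ≤ B 0
      apply Finset.sup'_le
      intro j _
      have hB0 : B 0 = ε := by simp [hB]
      rw [hB0]
      exact (h0 j).trans hε.le
    · -- contact bound
      intro x hx hfB
      apply (Finset.sup'_lt_iff (hne x)).2
      intro j hj
      rw [Finset.mem_filter] at hj
      exact hbound x hx (fun k => (hle x k).trans_eq hfB) j (hj.2.trans hfB)
  intro t ht j
  exact (hle t j).trans (key ht)

lemma pi_dist_of_abs {n : ℕ} (u v : Fin n → ℝ) {a : ℝ} (ha : 0 ≤ a)
    (h : ∀ j, |u j - v j| ≤ a) : dist u v ≤ a := by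
  rw [dist_pi_le_iff ha]
  intro j
  rw [Real.dist_eq]
  exact h j

lemma lip_coord {n m : ℕ} {K : NNReal}
    {d : (Fin n → ℝ) → (Fin m → ℝ) → (Fin n → ℝ) → (Fin m → ℝ) → Fin n → ℝ}
    (hlip : LipschitzWith K
      (fun p : (Fin n → ℝ) × (Fin m → ℝ) × (Fin n → ℝ) × (Fin m → ℝ) =>
        d p.1 p.2.1 p.2.2.1 p.2.2.2))
    (x x' xh xh' : Fin n → ℝ) (w wh : Fin m → ℝ) {B : ℝ} (hB : 0 ≤ B)
    (h1 : dist x x' ≤ B) (h2 : dist xh xh' ≤ B) (i : Fin n) :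
    d x w xh wh i ≤ d x' w xh' wh i + K * B := by
  have h3 : dist (d x w xh wh) (d x' w xh' wh) ≤ K * B := by
    have h4 := hlip.dist_le_mul (x, w, xh, wh) (x', w, xh', wh)
    have h5 : dist ((x, w, xh, wh) : (Fin n → ℝ) × (Fin m → ℝ) × (Fin n → ℝ) × (Fin m → ℝ))
        (x', w, xh', wh) ≤ B := by
      rw [Prod.dist_eq, Prod.dist_eq, Prod.dist_eq]
      simp only [dist_self]
      exact max_le h1 (max_le hB (max_le h2 hB))
    exact h4.trans (mul_le_mul_of_nonneg_left h5 K.coe_nonneg)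
  have h6 : d x w xh wh i - d x' w xh' wh i ≤ dist (d x w xh wh) (d x' w xh' wh) :=
    (le_abs_self _).trans ((Real.dist_eq _ _).symm ▸ dist_le_pi_dist _ _ i)
  linarith

lemma eps_le_zero {a c : ℝ} (hc : 0 < c) (h : ∀ ε > (0:ℝ), a ≤ ε * c) : a ≤ 0 := by
  by_contra hpos
  push_neg at hpos
  have h2 := h (a / (2 * c)) (by positivity)
  have h3 : a / (2 * c) * c = a / 2 := by field_simp
  rw [h3] at h2
  linarith

lemma embed_mono {n m : ℕ}
    (e : (Fin n → ℝ) → (Fin m → ℝ) → (Fin n → ℝ) → (Fin m → ℝ) → Fin n → ℝ)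
    (K : NNReal)
    (hlip : LipschitzWith K
      (fun p : (Fin n → ℝ) × (Fin m → ℝ) × (Fin n → ℝ) × (Fin m → ℝ) =>
        e p.1 p.2.1 p.2.2.1 p.2.2.2))
    (hC1 : ∀ (i : Fin n) (x y xh : Fin n → ℝ) (w v wh : Fin m → ℝ),
      InT x w xh wh → InT y v xh wh → x ≤ y → x i = y i → w ≤ v →
      e x w xh wh i ≤ e y v xh wh i)
    (hC2 : ∀ (i : Fin n) (x xh yh : Fin n → ℝ) (w wh vh : Fin m → ℝ),
      InT x w xh wh → InT x w yh vh → xh ≤ yh → wh ≤ vh →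
      e x w yh vh i ≤ e x w xh wh i)
    (wl wu : Fin m → ℝ) (hw : wl ≤ wu) (T : ℝ) (ul uu : ℝ → Fin n → ℝ)
    (h0 : ul 0 ≤ uu 0)
    (hdl : ∀ t ∈ Set.Icc (0:ℝ) T, HasDerivAt ul (e (ul t) wl (uu t) wu) t)
    (hdu : ∀ t ∈ Set.Icc (0:ℝ) T, HasDerivAt uu (e (uu t) wu (ul t) wl) t) :
    ∀ t ∈ Set.Icc (0:ℝ) T, ul t ≤ uu t := by
  set C : ℝ := 2 * K + 1 with hC
  have main : ∀ ε > (0:ℝ), ∀ t ∈ Set.Icc (0:ℝ) T, ∀ i : Fin n,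
      ul t i - uu t i ≤ ε * Real.exp (C * t) := by
    intro ε hε
    refine gronwall_max (fun i t => ul t i - uu t i)
      (fun i t => e (ul t) wl (uu t) wu i - e (uu t) wu (ul t) wl i) hε ?_ ?_ ?_
    · intro i t ht
      exact ((hasDerivAt_pi.1 (hdl t ht)) i).sub ((hasDerivAt_pi.1 (hdu t ht)) i)
    · intro i
      show ul 0 i - uu 0 i ≤ 0
      have := h0 i
      linarith
    · intro t ht hall i hi
      set B : ℝ := ε * Real.exp (C * t) with hBdef
      have hB : 0 < B := by positivity
      set u : Fin n → ℝ := ul t with hu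
      set v : Fin n → ℝ := uu t with hv
      have hall' : ∀ j, u j - v j ≤ B := hall
      have hi' : u i - v i = B := hi
      set p : Fin n → ℝ := fun j => u j - B with hp
      have hpv : p ≤ v := fun j => by show u j - B ≤ v j; linarith [hall' j]
      have hpu : p ≤ u := fun j => by show u j - B ≤ u j; linarith
      have hpi : p i = v i := by show u i - B = v i; linarith
      have hdistup : dist u p ≤ B :=
        pi_dist_of_abs u p hB.le fun j => by
          show |u j - (u j - B)| ≤ B
          simp [abs_of_nonneg hB.le]
      have hdistpu : dist p u ≤ B := dist_comm u p ▸ hdistup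
      have s1 : e u wl v wu i ≤ e p wl v wu i + K * B :=
        lip_coord hlip u p v v wl wu hB.le hdistup (by simpa using hB.le) i
      have s2 : e p wl v wu i ≤ e v wu v wu i :=
        hC1 i p v v wl wu wu (Or.inl ⟨hpv, hw⟩) (Or.inl ⟨le_refl v, le_refl wu⟩) hpv hpi hw
      have s3 : e v wu v wu i ≤ e v wu p wl i :=
        hC2 i v p v wu wl wu (Or.inr ⟨hpv, hw⟩) (Or.inl ⟨le_refl v, le_refl wu⟩) hpv hw
      have s4 : e v wu p wl i ≤ e v wu u wl i + K * B :=
        lip_coord hlip v v p u wu wl hB.le (by simpa using hB.le) hdistpu i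
      have hK : (0:ℝ) ≤ K := K.coe_nonneg
      show e u wl v wu i - e v wu u wl i < C * B
      have hCB : C * B = 2 * K * B + B := by rw [hC]; ring
      rw [hCB]
      linarith
  intro t ht i
  exact sub_nonpos.1 (eps_le_zero (Real.exp_pos (C * t))
    (fun ε hε => main ε hε t ht i))

/-- Proposition 2: a tight decomposition function `δ` yields tighter
reachable-set approximations than any other decomposition function `d`: for
embedding-system solutions from the same ordered initial condition,
`x̲(t) ≤ y̲(t)` and `ȳ(t) ≤ x̄(t)` for all `t ∈ [0,T]`. -/
theorem stmt9 {n m : ℕ} (F : (Fin n → ℝ) → (Fin m → ℝ) → Fin n → ℝ)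
    (d δ : (Fin n → ℝ) → (Fin m → ℝ) → (Fin n → ℝ) → (Fin m → ℝ) → Fin n → ℝ)
    (Kd Kδ : NNReal)
    (hd_lip : LipschitzWith Kd
      (fun p : (Fin n → ℝ) × (Fin m → ℝ) × (Fin n → ℝ) × (Fin m → ℝ) =>
        d p.1 p.2.1 p.2.2.1 p.2.2.2))
    (hδ_lip : LipschitzWith Kδ
      (fun p : (Fin n → ℝ) × (Fin m → ℝ) × (Fin n → ℝ) × (Fin m → ℝ) =>
        δ p.1 p.2.1 p.2.2.1 p.2.2.2))
    (hd : IsDecompFn F d) (hδ : IsDecompFn F δ)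
    (htight : ∀ (x xh : Fin n → ℝ) (w wh : Fin m → ℝ), x ≤ xh → w ≤ wh →
      d x w xh wh ≤ δ x w xh wh ∧ δ xh wh x w ≤ d xh wh x w)
    (wl wu : Fin m → ℝ) (hw : wl ≤ wu)
    (x0l x0u : Fin n → ℝ) (hx0 : x0l ≤ x0u) (T : ℝ)
    (xl xu yl yu : ℝ → Fin n → ℝ)
    (hxl0 : xl 0 = x0l) (hxu0 : xu 0 = x0u) (hyl0 : yl 0 = x0l) (hyu0 : yu 0 = x0u)
    (hxl : ∀ t ∈ Set.Icc (0 : ℝ) T, HasDerivAt xl (d (xl t) wl (xu t) wu) t)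
    (hxu : ∀ t ∈ Set.Icc (0 : ℝ) T, HasDerivAt xu (d (xu t) wu (xl t) wl) t)
    (hyl : ∀ t ∈ Set.Icc (0 : ℝ) T, HasDerivAt yl (δ (yl t) wl (yu t) wu) t)
    (hyu : ∀ t ∈ Set.Icc (0 : ℝ) T, HasDerivAt yu (δ (yu t) wu (yl t) wl) t) :
    ∀ t ∈ Set.Icc (0 : ℝ) T, xl t ≤ yl t ∧ yu t ≤ xu t := by
  have hxlu : ∀ t ∈ Set.Icc (0:ℝ) T, xl t ≤ xu t :=
    embed_mono d Kd hd_lip hd.2.1 hd.2.2 wl wu hw T xl xu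
      (by rw [hxl0, hxu0]; exact hx0) hxl hxu
  have hylu : ∀ t ∈ Set.Icc (0:ℝ) T, yl t ≤ yu t :=
    embed_mono δ Kδ hδ_lip hδ.2.1 hδ.2.2 wl wu hw T yl yu
      (by rw [hyl0, hyu0]; exact hx0) hyl hyu
  set C : ℝ := 3 * ((Kd : ℝ) + (Kδ : ℝ)) + 1 with hC
  set g : ((Fin n ⊕ Fin n) ⊕ (Fin n ⊕ Fin n)) → ℝ → ℝ :=
    Sum.elim (Sum.elim (fun i t => xl t i - yl t i) (fun i t => yu t i - xu t i))
             (Sum.elim (fun i t => xl t i - yu t i) (fun i t => yl t i - xu t i)) with hg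
  set g' : ((Fin n ⊕ Fin n) ⊕ (Fin n ⊕ Fin n)) → ℝ → ℝ :=
    Sum.elim
      (Sum.elim (fun i t => d (xl t) wl (xu t) wu i - δ (yl t) wl (yu t) wu i)
                (fun i t => δ (yu t) wu (yl t) wl i - d (xu t) wu (xl t) wl i))
      (Sum.elim (fun i t => d (xl t) wl (xu t) wu i - δ (yu t) wu (yl t) wl i)
                (fun i t => δ (yl t) wl (yu t) wu i - d (xu t) wu (xl t) wl i)) with hg'
  have hKd : (0:ℝ) ≤ Kd := Kd.coe_nonneg
  have hKδ : (0:ℝ) ≤ Kδ := Kδ.coe_nonneg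
  have main : ∀ ε > (0:ℝ), ∀ t ∈ Set.Icc (0:ℝ) T, ∀ j, g j t ≤ ε * Real.exp (C * t) := by
    intro ε hε
    refine gronwall_max g g' hε ?_ ?_ ?_
    · rintro ((i | i) | (i | i)) t ht
      · exact ((hasDerivAt_pi.1 (hxl t ht)) i).sub ((hasDerivAt_pi.1 (hyl t ht)) i)
      · exact ((hasDerivAt_pi.1 (hyu t ht)) i).sub ((hasDerivAt_pi.1 (hxu t ht)) i)
      · exact ((hasDerivAt_pi.1 (hxl t ht)) i).sub ((hasDerivAt_pi.1 (hyu t ht)) i)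
      · exact ((hasDerivAt_pi.1 (hyl t ht)) i).sub ((hasDerivAt_pi.1 (hxu t ht)) i)
    · rintro ((i | i) | (i | i))
      · show xl 0 i - yl 0 i ≤ 0
        rw [hxl0, hyl0]; simp
      · show yu 0 i - xu 0 i ≤ 0
        rw [hyu0, hxu0]; simp
      · show xl 0 i - yu 0 i ≤ 0
        rw [hxl0, hyu0]; linarith [hx0 i]
      · show yl 0 i - xu 0 i ≤ 0
        rw [hyl0, hxu0]; linarith [hx0 i]
    · intro t ht hall
      set B : ℝ := ε * Real.exp (C * t) with hBdef
      have hB : 0 < B := by positivity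
      have htIcc : t ∈ Set.Icc (0:ℝ) T := Set.Ico_subset_Icc_self ht
      set u1 : Fin n → ℝ := xl t with hu1
      set u2 : Fin n → ℝ := xu t with hu2
      set v1 : Fin n → ℝ := yl t with hv1
      set v2 : Fin n → ℝ := yu t with hv2
      have S1 : ∀ j, u1 j - v1 j ≤ B := fun j => hall (Sum.inl (Sum.inl j))
      have S2 : ∀ j, v2 j - u2 j ≤ B := fun j => hall (Sum.inl (Sum.inr j))
      have S5 : ∀ j, u1 j - v2 j ≤ B := fun j => hall (Sum.inr (Sum.inl j))
      have S6 : ∀ j, v1 j - u2 j ≤ B := fun j => hall (Sum.inr (Sum.inr j))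
      have E3 : u1 ≤ u2 := hxlu t htIcc
      have E4 : v1 ≤ v2 := hylu t htIcc
      set p : Fin n → ℝ := fun j => u1 j - B with hp
      set q : Fin n → ℝ := fun j => u2 j + B with hq
      set p2 : Fin n → ℝ := fun j => u1 j - 2 * B with hp2
      have hpq : p ≤ q := fun j => by show u1 j - B ≤ u2 j + B; linarith [E3 j]
      have hpv1 : p ≤ v1 := fun j => by show u1 j - B ≤ v1 j; linarith [S1 j]
      have hpv2 : p ≤ v2 := fun j => by show u1 j - B ≤ v2 j; linarith [S5 j]
      have hv1q : v1 ≤ q := fun j => by show v1 j ≤ u2 j + B; linarith [S6 j]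
      have hv2q : v2 ≤ q := fun j => by show v2 j ≤ u2 j + B; linarith [S2 j]
      have hp2v1 : p2 ≤ v1 := fun j => by show u1 j - 2 * B ≤ v1 j; linarith [S1 j]
      have hp2v2 : p2 ≤ v2 := fun j => by show u1 j - 2 * B ≤ v2 j; linarith [S5 j]
      have hp2u2 : p2 ≤ u2 := fun j => by show u1 j - 2 * B ≤ u2 j; linarith [E3 j]
      have hdu1p : dist u1 p ≤ B := pi_dist_of_abs u1 p hB.le fun j => by
        show |u1 j - (u1 j - B)| ≤ B; simp [abs_of_nonneg hB.le]
      have hdu2q : dist u2 q ≤ B := pi_dist_of_abs u2 q hB.le fun j => by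
        show |u2 j - (u2 j + B)| ≤ B
        rw [show u2 j - (u2 j + B) = -B by ring, abs_neg, abs_of_nonneg hB.le]
      have hdp2u1 : dist p2 u1 ≤ 2 * B := pi_dist_of_abs p2 u1 (by linarith) fun j => by
        show |u1 j - 2 * B - u1 j| ≤ 2 * B
        rw [show u1 j - 2 * B - u1 j = -(2*B) by ring, abs_neg, abs_of_nonneg (by linarith)]
      have hCB : C * B = 3 * (Kd : ℝ) * B + 3 * (Kδ : ℝ) * B + B := by rw [hC]; ring
      have hKdB : (0:ℝ) ≤ (Kd : ℝ) * B := mul_nonneg hKd hB.le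
      have hKδB : (0:ℝ) ≤ (Kδ : ℝ) * B := mul_nonneg hKδ hB.le
      rintro ((i | i) | (i | i)) hi
      · -- case 1 : xl_i - yl_i hits B
        have hi' : u1 i - v1 i = B := hi
        have hpi : p i = v1 i := by show u1 i - B = v1 i; linarith
        have c1 : d u1 wl u2 wu i ≤ d p wl q wu i + Kd * B :=
          lip_coord hd_lip u1 p u2 q wl wu hB.le hdu1p hdu2q i
        have c2 : d p wl q wu i ≤ δ p wl q wu i := (htight p q wl wu hpq hw).1 i
        have c3 : δ p wl q wu i ≤ δ v1 wl q wu i :=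
          hδ.2.1 i p v1 q wl wl wu (Or.inl ⟨hpq, hw⟩) (Or.inl ⟨hv1q, hw⟩) hpv1 hpi
            (le_refl wl)
        have c4 : δ v1 wl q wu i ≤ δ v1 wl v2 wu i :=
          hδ.2.2 i v1 v2 q wl wu wu (Or.inl ⟨E4, hw⟩) (Or.inl ⟨hv1q, hw⟩) hv2q (le_refl wu)
        show d u1 wl u2 wu i - δ v1 wl v2 wu i < C * B
        rw [hCB]; linarith
      · -- case 2 : yu_i - xu_i hits B
        have hi' : v2 i - u2 i = B := hi
        set P : Fin n → ℝ := fun j => v2 j - B with hP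
        have hPu2 : P ≤ u2 := fun j => by show v2 j - B ≤ u2 j; linarith [S2 j]
        have hPi : P i = u2 i := by show v2 i - B = u2 i; linarith
        have hp2P : p2 ≤ P := fun j => by show u1 j - 2 * B ≤ v2 j - B; linarith [S5 j]
        have hdv2P : dist v2 P ≤ B := pi_dist_of_abs v2 P hB.le fun j => by
          show |v2 j - (v2 j - B)| ≤ B; simp [abs_of_nonneg hB.le]
        have t1 : δ v2 wu v1 wl i ≤ d v2 wu v1 wl i := (htight v1 v2 wl wu E4 hw).2 i
        have t2 : d v2 wu v1 wl i ≤ d v2 wu p2 wl i :=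
          hd.2.2 i v2 p2 v1 wu wl wl (Or.inr ⟨hp2v2, hw⟩) (Or.inr ⟨E4, hw⟩) hp2v1
            (le_refl wl)
        have t3 : d v2 wu p2 wl i ≤ d P wu p2 wl i + Kd * B :=
          lip_coord hd_lip v2 P p2 p2 wu wl hB.le hdv2P (by simpa using hB.le) i
        have t4 : d P wu p2 wl i ≤ d u2 wu p2 wl i :=
          hd.2.1 i P u2 p2 wu wu wl (Or.inr ⟨hp2P, hw⟩) (Or.inr ⟨hp2u2, hw⟩) hPu2 hPi
            (le_refl wu)
        have t5 : d u2 wu p2 wl i ≤ d u2 wu u1 wl i + Kd * (2 * B) :=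
          lip_coord hd_lip u2 u2 p2 u1 wu wl (by linarith) (by simpa using by linarith : dist u2 u2 ≤ 2*B) hdp2u1 i
        show δ v2 wu v1 wl i - d u2 wu u1 wl i < C * B
        rw [hCB]; linarith
      · -- case 5 : xl_i - yu_i hits B
        have hi' : u1 i - v2 i = B := hi
        have hpi : p i = v2 i := by show u1 i - B = v2 i; linarith
        have c1 : d u1 wl u2 wu i ≤ d p wl q wu i + Kd * B :=
          lip_coord hd_lip u1 p u2 q wl wu hB.le hdu1p hdu2q i
        have c2 : d p wl q wu i ≤ δ p wl q wu i := (htight p q wl wu hpq hw).1 i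
        have c3 : δ p wl q wu i ≤ δ v2 wu q wu i :=
          hδ.2.1 i p v2 q wl wu wu (Or.inl ⟨hpq, hw⟩) (Or.inl ⟨hv2q, le_refl wu⟩) hpv2 hpi hw
        have c4 : δ v2 wu q wu i ≤ δ v2 wu v1 wl i :=
          hδ.2.2 i v2 v1 q wu wl wu (Or.inr ⟨E4, hw⟩) (Or.inl ⟨hv2q, le_refl wu⟩) hv1q hw
        show d u1 wl u2 wu i - δ v2 wu v1 wl i < C * B
        rw [hCB]; linarith
      · -- case 6 : yl_i - xu_i hits B
        have hi' : v1 i - u2 i = B := hi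
        set P : Fin n → ℝ := fun j => v1 j - B with hP
        have hPu2 : P ≤ u2 := fun j => by show v1 j - B ≤ u2 j; linarith [S6 j]
        have hPi : P i = u2 i := by show v1 i - B = u2 i; linarith
        have hp2P : p2 ≤ P := fun j => by show u1 j - 2 * B ≤ v1 j - B; linarith [S1 j]
        have hdv1P : dist v1 P ≤ B := pi_dist_of_abs v1 P hB.le fun j => by
          show |v1 j - (v1 j - B)| ≤ B; simp [abs_of_nonneg hB.le]
        have c1 : δ v1 wl v2 wu i ≤ δ v1 wl p2 wl i :=
          hδ.2.2 i v1 p2 v2 wl wl wu (Or.inr ⟨hp2v1, le_refl wl⟩) (Or.inl ⟨E4, hw⟩)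
            hp2v2 hw
        have c2 : δ v1 wl p2 wl i ≤ δ P wl p2 wl i + Kδ * B :=
          lip_coord hδ_lip v1 P p2 p2 wl wl hB.le hdv1P (by simpa using hB.le) i
        have c3 : δ P wl p2 wl i ≤ δ u2 wu p2 wl i :=
          hδ.2.1 i P u2 p2 wl wu wl (Or.inr ⟨hp2P, le_refl wl⟩) (Or.inr ⟨hp2u2, hw⟩)
            hPu2 hPi hw
        have c4 : δ u2 wu p2 wl i ≤ δ u2 wu u1 wl i + Kδ * (2 * B) :=
          lip_coord hδ_lip u2 u2 p2 u1 wu wl (by linarith) (by simpa using by linarith : dist u2 u2 ≤ 2*B) hdp2u1 i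
        have c5 : δ u2 wu u1 wl i ≤ d u2 wu u1 wl i := (htight u1 u2 wl wu E3 hw).2 i
        show δ v1 wl v2 wu i - d u2 wu u1 wl i < C * B
        rw [hCB]; linarith
  intro t ht
  have hexp := Real.exp_pos (C * t)
  constructor
  · intro i
    have h1 : xl t i - yl t i ≤ 0 :=
      eps_le_zero hexp fun ε hε => main ε hε t ht (Sum.inl (Sum.inl i))
    linarith
  · intro i
    have h2 : yu t i - xu t i ≤ 0 :=
      eps_le_zero hexp fun ε hε => main ε hε t ht (Sum.inl (Sum.inr i))
    linarith
end

section
/- Let f : ℝⁿ → ℝ be Lipschitz continuous and let S be a set of coordinate indices. Suppose that at every point x at which f is differentiable, the partial derivative of f in coordinate j at x is nonnegative for every j ∈ S. Then f(x) ≤ f(y) whenever x ≤ y componentwise and x_k = y_k for all k ∉ S. -/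
open MeasureTheory Filter Set Topology

lemma slope_tendsto_aux {φ : ℝ → ℝ} {c u : ℝ} (hφ : HasDerivAt φ c u) :
    Tendsto (fun n : ℕ => (φ (u + ((n : ℝ) + 1)⁻¹) - φ u) / ((n : ℝ) + 1)⁻¹) atTop (𝓝 c) := by
  have h0 : Tendsto (fun n : ℕ => ((n : ℝ) + 1)⁻¹) atTop (𝓝 0) := by
    simpa [one_div] using tendsto_one_div_add_atTop_nhds_zero_nat (𝕜 := ℝ)
  have h1 : Tendsto (fun n : ℕ => u + ((n : ℝ) + 1)⁻¹) atTop (𝓝[≠] u) := by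
    apply tendsto_nhdsWithin_of_tendsto_nhds_of_eventually_within
    · simpa using tendsto_const_nhds.add h0
    · filter_upwards with n
      have : (0:ℝ) < ((n : ℝ) + 1)⁻¹ := by positivity
      simp only [mem_compl_iff, mem_singleton_iff]
      intro hcon
      nlinarith [hcon]
  have := (hasDerivAt_iff_tendsto_slope.1 hφ).comp h1
  convert this using 2 with n
  simp [slope_def_field, Function.comp]

lemma lip_aux1D {g : ℝ → ℝ} {K : NNReal} (hg : LipschitzWith K g)
    (hder : ∀ᵐ t : ℝ, DifferentiableAt ℝ g t ∧ 0 ≤ deriv g t) : g 0 ≤ g 1 := by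
  have gc : Continuous g := hg.continuous
  set h : ℕ → ℝ := fun n => ((n : ℝ) + 1)⁻¹ with hh
  have hpos : ∀ n, 0 < h n := fun n => by positivity
  set F : ℝ → ℝ := fun u => ∫ s in (0:ℝ)..u, g s with hF
  have hFd : ∀ u : ℝ, HasDerivAt F (g u) u := by
    intro u
    exact intervalIntegral.integral_hasDerivAt_right (gc.intervalIntegrable 0 u)
      gc.stronglyMeasurable.stronglyMeasurableAtFilter gc.continuousAt
  -- value of the difference-quotient integral
  have key : ∀ n, ∫ t in (0:ℝ)..1, (g (t + h n) - g t) / h n =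
      (F (1 + h n) - F 1) / h n - (F (0 + h n) - F 0) / h n := by
    intro n
    have i1 : IntervalIntegrable (fun t => g (t + h n)) volume 0 1 :=
      (gc.comp (continuous_add_right _)).intervalIntegrable 0 1
    have i2 : IntervalIntegrable g volume 0 1 := gc.intervalIntegrable 0 1
    have e1 : ∫ t in (0:ℝ)..1, (g (t + h n) - g t) / h n
        = ((∫ t in (0:ℝ)..1, g (t + h n)) - ∫ t in (0:ℝ)..1, g t) / h n := by
      rw [← intervalIntegral.integral_sub i1 i2, intervalIntegral.integral_div]
    have e2 : (∫ t in (0:ℝ)..1, g (t + h n)) = ∫ t in (h n)..(1 + h n), g t := by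
      simpa using intervalIntegral.integral_comp_add_right (a := (0:ℝ)) (b := 1) g (h n)
    have e3 : (∫ t in (h n)..(1 + h n), g t) = F (1 + h n) - F (h n) := by
      rw [hF]
      rw [← intervalIntegral.integral_interval_sub_left
        (gc.intervalIntegrable 0 (1 + h n)) (gc.intervalIntegrable 0 (h n))]
    have e4 : F 0 = 0 := by simp [hF]
    have e5 : (∫ t in (0:ℝ)..1, g t) = F 1 := rfl
    rw [e1, e2, e3, e5, e4]
    field_simp
    ring
  -- the difference-quotient integral tends to g 1 - g 0
  have lim1 : Tendsto (fun n => ∫ t in (0:ℝ)..1, (g (t + h n) - g t) / h n) atTop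
      (𝓝 (g 1 - g 0)) := by
    have t1 := slope_tendsto_aux (hFd 1)
    have t0 := slope_tendsto_aux (hFd 0)
    have := t1.sub t0
    simp only [key]
    convert this using 2 with n
  -- dominated convergence: it also tends to ∫ deriv g
  have lim2 : Tendsto (fun n => ∫ t in Ioc (0:ℝ) 1, (g (t + h n) - g t) / h n) atTop
      (𝓝 (∫ t in Ioc (0:ℝ) 1, deriv g t)) := by
    apply tendsto_integral_of_dominated_convergence (fun _ => (K : ℝ))
    · intro n
      exact (((gc.comp (continuous_add_right _)).sub gc).div_const _).aestronglyMeasurable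
    · exact integrableOn_const measure_Ioc_lt_top.ne
    · intro n
      filter_upwards with t
      have hb : |g (t + h n) - g t| ≤ K * |h n| := by
        have := hg.dist_le_mul (t + h n) t
        simpa [Real.dist_eq, abs_of_pos (hpos n)] using this
      rw [Real.norm_eq_abs, abs_div]
      rw [div_le_iff₀ (by simpa [abs_of_pos (hpos n)] using hpos n)]
      calc |g (t + h n) - g t| ≤ K * |h n| := hb
        _ = K * |h n| := rfl
    · have : ∀ᵐ t : ℝ ∂(volume.restrict (Ioc (0:ℝ) 1)), DifferentiableAt ℝ g t ∧ 0 ≤ deriv g t :=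
        ae_restrict_of_ae hder
      filter_upwards [this] with t ht
      exact slope_tendsto_aux ht.1.hasDerivAt
  have lim1' : Tendsto (fun n => ∫ t in Ioc (0:ℝ) 1, (g (t + h n) - g t) / h n) atTop
      (𝓝 (g 1 - g 0)) := by
    simpa [intervalIntegral.integral_of_le (zero_le_one' ℝ)] using lim1
  have heq : g 1 - g 0 = ∫ t in Ioc (0:ℝ) 1, deriv g t := tendsto_nhds_unique lim1' lim2
  have hnn : 0 ≤ ∫ t in Ioc (0:ℝ) 1, deriv g t := by
    apply integral_nonneg_of_ae
    filter_upwards [ae_restrict_of_ae hder] with t ht using ht.2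
  linarith

/-- Remark 1, one direction: a Lipschitz function whose partial derivatives
in the coordinates of `S` are nonnegative at every point of differentiability is monotone
with respect to increases in the coordinates of `S`. -/
theorem stmt12 {n : ℕ} (f : (Fin n → ℝ) → ℝ) (K : NNReal) (hf : LipschitzWith K f)
    (S : Set (Fin n))
    (hder : ∀ x : Fin n → ℝ, DifferentiableAt ℝ f x →
      ∀ j ∈ S, 0 ≤ fderiv ℝ f x (Pi.single j 1))
    (x y : Fin n → ℝ) (hxy : x ≤ y) (hfix : ∀ k ∉ S, x k = y k) :
    f x ≤ f y := by
  classical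
  set v : Fin n → ℝ := y - x with hv
  have hD : MeasurableSet {z : Fin n → ℝ | DifferentiableAt ℝ f z} :=
    measurableSet_of_differentiableAt ℝ f
  have hae : ∀ᵐ z ∂(volume : Measure (Fin n → ℝ)),
      z ∈ {z : Fin n → ℝ | DifferentiableAt ℝ f z} := hf.ae_differentiableAt
  set L : ℝ →ₗ[ℝ] (Fin n → ℝ) := LinearMap.toSpanSingleton ℝ _ v with hL
  have key := (MeasureTheory.ae_ae_add_linearMap_mem_iff L volume volume hD).2 hae
  set C : Set (Fin n → ℝ) := {z | f z ≤ f (z + v)} with hC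
  have hCc : IsClosed C :=
    isClosed_le hf.continuous (hf.continuous.comp (continuous_id.add continuous_const))
  have hCae : ∀ᵐ z ∂(volume : Measure (Fin n → ℝ)), z ∈ C := by
    filter_upwards [key] with z hz
    set g : ℝ → ℝ := fun t => f (z + t • v) with hg
    set Lc : ℝ →L[ℝ] (Fin n → ℝ) := ContinuousLinearMap.smulRight (1 : ℝ →L[ℝ] ℝ) v with hLc
    have hgl : LipschitzWith (K * (0 + ‖Lc‖₊)) g := by
      have H := hf.comp ((LipschitzWith.const (b := z)).add Lc.lipschitz)
      have : (f ∘ fun t => z + Lc t) = g := by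
        funext t; simp [hg, hLc]
      rwa [this] at H
    have hae2 : ∀ᵐ t : ℝ, DifferentiableAt ℝ g t ∧ 0 ≤ deriv g t := by
      filter_upwards [hz] with t ht
      have ht' : DifferentiableAt ℝ f (z + t • v) := by
        simpa [hL, LinearMap.toSpanSingleton_apply] using ht
      have hA : HasDerivAt (fun s : ℝ => z + s • v) v t := by
        simpa using ((hasDerivAt_id t).smul_const v).const_add z
      have hgd : HasDerivAt g (fderiv ℝ f (z + t • v) v) t :=
        ht'.hasFDerivAt.comp_hasDerivAt t hA
      refine ⟨hgd.differentiableAt, ?_⟩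
      rw [hgd.deriv]
      have hvsum : v = ∑ j, v j • (Pi.single j 1 : Fin n → ℝ) := by
        funext k
        rw [Finset.sum_apply]
        simp [Pi.single_apply, Finset.sum_ite_eq]
      have hsum : (fderiv ℝ f (z + t • v)) v
          = ∑ j, v j * (fderiv ℝ f (z + t • v)) (Pi.single j 1) := by
        conv_lhs => rw [hvsum]
        rw [map_sum]
        simp only [ContinuousLinearMap.map_smul, smul_eq_mul]
        rw [← hvsum]
      rw [hsum]
      apply Finset.sum_nonneg
      intro j _
      by_cases hj : j ∈ S
      · have h1 : 0 ≤ v j := by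
          have := hxy j
          simp [hv, sub_nonneg, this]
        have h2 := hder _ ht' j hj
        exact mul_nonneg h1 h2
      · have : v j = 0 := by simp [hv, hfix j hj]
        simp [this]
    have h01 := lip_aux1D hgl hae2
    have e0 : g 0 = f z := by simp [hg]
    have e1 : g 1 = f (z + v) := by simp [hg]
    simpa [hC, e0, e1] using h01
  have hdense : Dense C := MeasureTheory.Measure.dense_of_ae hCae
  have hCuniv : C = Set.univ := by
    rw [← hCc.closure_eq, hdense.closure_eq]
  have hx : x ∈ C := by rw [hCuniv]; trivial
  have hxv : x + v = y := by
    funext k; simp [hv]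
  rw [hC] at hx
  simpa [hxv] using hx
end

section
/- For all x ≤ x̂ in ℝ²: min{|y₁ − y₂| : y ∈ [x,x̂], y₁ = x₁} equals 0 if x₂ ≤ x₁ ≤ x̂₂, equals x₂ − x₁ if x₁ ≤ x₂, and equals x₁ − x̂₂ if x̂₂ ≤ x₁; and min{−y₁ : y ∈ [x,x̂], y₂ = x₂} = −x̂₁. Hence the piecewise function δ with these components is the tight (minimization-branch) decomposition function for the disturbance-free planar system ẋ₁ = |x₁ − x₂|, ẋ₂ = −x₁. -/
lemma csInf_eq_of_mem_of_lb {S : Set ℝ} {a : ℝ} (hmem : a ∈ S)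
    (hlb : ∀ v ∈ S, a ≤ v) : sInf S = a :=
  le_antisymm (csInf_le ⟨a, hlb⟩ hmem) (le_csInf ⟨a, hmem⟩ hlb)

/-- Example 1: closed-form tight decomposition function for the planar
system `ẋ₁ = |x₁ − x₂|`, `ẋ₂ = −x₁`. For `x ≤ x̂` in `ℝ²`:
`min{|y₁ − y₂| : y ∈ [x,x̂], y₁ = x₁}` equals `0` if `x₂ ≤ x₁ ≤ x̂₂`, equals `x₂ − x₁` if
`x₁ ≤ x₂`, and equals `x₁ − x̂₂` if `x̂₂ ≤ x₁`; and `min{−y₁ : y ∈ [x,x̂], y₂ = x₂} = −x̂₁`. -/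
theorem stmt15 (x xh : Fin 2 → ℝ) (hx : x ≤ xh) :
    ((x 1 ≤ x 0 → x 0 ≤ xh 1 →
        sInf {v : ℝ | ∃ y : Fin 2 → ℝ,
          x ≤ y ∧ y ≤ xh ∧ y 0 = x 0 ∧ v = |y 0 - y 1|} = 0) ∧
     (x 0 ≤ x 1 →
        sInf {v : ℝ | ∃ y : Fin 2 → ℝ,
          x ≤ y ∧ y ≤ xh ∧ y 0 = x 0 ∧ v = |y 0 - y 1|} = x 1 - x 0) ∧
     (xh 1 ≤ x 0 →
        sInf {v : ℝ | ∃ y : Fin 2 → ℝ,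
          x ≤ y ∧ y ≤ xh ∧ y 0 = x 0 ∧ v = |y 0 - y 1|} = x 0 - xh 1)) ∧
    sInf {v : ℝ | ∃ y : Fin 2 → ℝ,
      x ≤ y ∧ y ≤ xh ∧ y 1 = x 1 ∧ v = -y 0} = -xh 0 := by
  have h0 := hx 0
  have h1 := hx 1
  refine ⟨⟨?_, ?_, ?_⟩, ?_⟩
  · intro ha hb
    apply csInf_eq_of_mem_of_lb
    · exact ⟨![x 0, x 0], by
        refine ⟨fun i => ?_, fun i => ?_, by simp, by simp⟩ <;> fin_cases i <;>
          simp [ha, hb, h0, le_refl]⟩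
    · rintro v ⟨y, -, -, -, rfl⟩; positivity
  · intro ha
    apply csInf_eq_of_mem_of_lb
    · exact ⟨![x 0, x 1], by
        refine ⟨fun i => ?_, fun i => ?_, by simp, ?_⟩
        · fin_cases i <;> simp
        · fin_cases i <;> simp [h0, h1]
        · simp; rw [abs_of_nonpos (by linarith)]; ring⟩
    · rintro v ⟨y, hy1, hy2, hy3, rfl⟩
      have := hy1 1
      have : y 1 - y 0 ≤ |y 0 - y 1| := by rw [abs_sub_comm]; exact le_abs_self _
      linarith [hy1 1]
  · intro ha
    apply csInf_eq_of_mem_of_lb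
    · exact ⟨![x 0, xh 1], by
        refine ⟨fun i => ?_, fun i => ?_, by simp, ?_⟩
        · fin_cases i <;> simp [h1]
        · fin_cases i <;> simp [h0]
        · simp; rw [abs_of_nonneg (by linarith)]⟩
    · rintro v ⟨y, hy1, hy2, hy3, rfl⟩
      have : y 0 - y 1 ≤ |y 0 - y 1| := le_abs_self _
      linarith [hy2 1]
  · apply csInf_eq_of_mem_of_lb
    · exact ⟨![xh 0, x 1], by
        refine ⟨fun i => ?_, fun i => ?_, by simp, by simp⟩ <;> fin_cases i <;>
          simp [h0, h1]⟩
    · rintro v ⟨y, hy1, hy2, hy3, rfl⟩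
      linarith [hy2 0]
end

section
/- Let w ≤ ŵ in ℝ² with ŵ₁ ≤ 0, let p ≤ q in ℝ, and set m := min{z₁ s² − s + z₂ : s ∈ [p,q], z ∈ [w,ŵ]}. Then m = w₁ p² − p + w₂ if w₁(p+q) ≥ 1, and m = w₁ q² − q + w₂ if w₁(p+q) ≤ 1. (This computes, in closed form, the first component of the tight decomposition function for the vector field with F₁(x,w) = w₁x₂² − x₂ + w₂ over the parameter range of the paper's numerical example, where the first disturbance component is nonpositive.) -/
/-- closed-form first component of the tight decomposition function for
`F₁(x,w) = w₁x₂² − x₂ + w₂` when the first disturbance component is nonpositive. With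
`w ≤ ŵ` in `ℝ²`, `ŵ₁ ≤ 0`, `p ≤ q`, and
`m := min{z₁s² − s + z₂ : s ∈ [p,q], z ∈ [w,ŵ]}`, we have `m = w₁p² − p + w₂` if
`w₁(p+q) ≥ 1` and `m = w₁q² − q + w₂` if `w₁(p+q) ≤ 1`. -/
theorem stmt16 (w wh : Fin 2 → ℝ) (hw : w ≤ wh) (hwh0 : wh 0 ≤ 0)
    (p q : ℝ) (hpq : p ≤ q) :
    (1 ≤ w 0 * (p + q) →
      sInf {v : ℝ | ∃ s ∈ Set.Icc p q, ∃ z : Fin 2 → ℝ,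
        w ≤ z ∧ z ≤ wh ∧ v = z 0 * s ^ 2 - s + z 1} = w 0 * p ^ 2 - p + w 1) ∧
    (w 0 * (p + q) ≤ 1 →
      sInf {v : ℝ | ∃ s ∈ Set.Icc p q, ∃ z : Fin 2 → ℝ,
        w ≤ z ∧ z ≤ wh ∧ v = z 0 * s ^ 2 - s + z 1} = w 0 * q ^ 2 - q + w 1) := by
  have hw00 : w 0 ≤ 0 := le_trans (hw 0) hwh0
  constructor
  · intro h1
    apply IsLeast.csInf_eq
    constructor
    · exact ⟨p, ⟨le_refl p, hpq⟩, w, le_refl w, hw, rfl⟩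
    · rintro v ⟨s, ⟨hsp, hsq⟩, z, hz1, hz2, rfl⟩
      have hz0 : w 0 ≤ z 0 := hz1 0
      have hz1' : w 1 ≤ z 1 := hz1 1
      have key : 0 ≤ w 0 * (s - p) * (s - q) := by
        have h1' : w 0 * (s - p) ≤ 0 :=
          mul_nonpos_of_nonpos_of_nonneg hw00 (by linarith)
        nlinarith [h1']
      nlinarith [mul_nonneg (sub_nonneg.2 hz0) (sq_nonneg s),
        mul_nonneg (sub_nonneg.2 h1) (sub_nonneg.2 hsp)]
  · intro h1
    apply IsLeast.csInf_eq
    constructor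
    · exact ⟨q, ⟨hpq, le_refl q⟩, w, le_refl w, hw, rfl⟩
    · rintro v ⟨s, ⟨hsp, hsq⟩, z, hz1, hz2, rfl⟩
      have hz0 : w 0 ≤ z 0 := hz1 0
      have hz1' : w 1 ≤ z 1 := hz1 1
      have key : 0 ≤ w 0 * (s - p) * (s - q) := by
        have h1' : w 0 * (s - p) ≤ 0 :=
          mul_nonpos_of_nonpos_of_nonneg hw00 (by linarith)
        nlinarith [h1']
      nlinarith [mul_nonneg (sub_nonneg.2 hz0) (sq_nonneg s),
        mul_nonneg (sub_nonneg.2 h1) (sub_nonneg.2 hsq)]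
end

section
/- Let F : ℝⁿ × ℝᵐ → ℝⁿ be Lipschitz continuous. Then there exists a function δ defined on T with values in ℝⁿ that is Lipschitz continuous and is a decomposition function for F, i.e., it satisfies (D1) δ(x,w,x,w) = F(x,w) for all x, w, together with the Kamke conditions (C1) and (C2). In particular, every continuous-time system ẋ = F(x,w) with Lipschitz continuous vector field is mixed-monotone. -/
lemma sum_dist_bound {k : ℕ} (u v : Fin k → ℝ) :
    |(∑ j, u j) - (∑ j, v j)| ≤ k * dist u v := by
  rw [← Finset.sum_sub_distrib]
  calc |∑ j, (u j - v j)| ≤ ∑ j, |u j - v j| := Finset.abs_sum_le_sum_abs _ _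
    _ ≤ ∑ _j : Fin k, dist u v := by
        refine Finset.sum_le_sum fun j _ => ?_
        rw [← Real.dist_eq]; exact dist_le_pi_dist u v j
    _ = k * dist u v := by simp [Finset.sum_const, mul_comm]

lemma abs_sub' (a b : ℝ) : |a - b| ≤ |a| + |b| := by
  rw [sub_eq_add_neg]; exact (abs_add_le _ _).trans (by rw [abs_neg])

/-- midpoint distance bound when the varying parts satisfy u ≤ u'. -/
lemma mid_dist_bound {k : ℕ} {u u' : Fin k → ℝ} (c : Fin k → ℝ) (huu : u ≤ u')
    {S : ℝ} (hle : ∀ j, u' j - u j ≤ S) (hS : 0 ≤ S) :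
    dist (fun j => (c j + u j) / 2) (fun j => (c j + u' j) / 2) ≤ S / 2 := by
  refine (dist_pi_le_iff (by positivity)).2 fun j => ?_
  rw [Real.dist_eq]
  have h1 : u j ≤ u' j := huu j
  have h2 := hle j
  rw [abs_of_nonpos (by linarith)]
  linarith

noncomputable def decomp {n m : ℕ} (F : (Fin n → ℝ) → (Fin m → ℝ) → Fin n → ℝ) (K : ℝ)
    (x : Fin n → ℝ) (w : Fin m → ℝ) (xh : Fin n → ℝ) (wh : Fin m → ℝ) (i : Fin n) : ℝ :=
  F (fun j => (x j + xh j) / 2) (fun k => (w k + wh k) / 2) i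
    + (K / 2) * (((∑ j, x j) - ∑ j, xh j) + ((∑ k, w k) - ∑ k, wh k))

/-- key estimate: varying (x,w) ↦ (y,v) upward in the first midpoint slots. -/
lemma decomp_key {n m : ℕ} {F : (Fin n → ℝ) → (Fin m → ℝ) → Fin n → ℝ} {K : NNReal}
    (hF : LipschitzWith K (fun p : (Fin n → ℝ) × (Fin m → ℝ) => F p.1 p.2))
    (i : Fin n) {x y : Fin n → ℝ} (xh : Fin n → ℝ) {w v : Fin m → ℝ} (wh : Fin m → ℝ)
    (hxy : x ≤ y) (hwv : w ≤ v) :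
    |F (fun j => (x j + xh j) / 2) (fun k => (w k + wh k) / 2) i
      - F (fun j => (y j + xh j) / 2) (fun k => (v k + wh k) / 2) i|
    ≤ (K : ℝ) * (((∑ j, (y j - x j)) + ∑ k, (v k - w k)) / 2) := by
  set S : ℝ := (∑ j, (y j - x j)) + ∑ k, (v k - w k) with hS
  have hSx : (0:ℝ) ≤ ∑ j, (y j - x j) := Finset.sum_nonneg fun j _ => sub_nonneg.2 (hxy j)
  have hSw : (0:ℝ) ≤ ∑ k, (v k - w k) := Finset.sum_nonneg fun k _ => sub_nonneg.2 (hwv k)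
  have hS0 : 0 ≤ S := by linarith
  have hd1 : dist (fun j => (x j + xh j) / 2) (fun j => (y j + xh j) / 2) ≤ S / 2 := by
    have := mid_dist_bound (u := x) (u' := y) xh hxy (S := S)
      (fun j => by
        have : y j - x j ≤ ∑ j, (y j - x j) :=
          Finset.single_le_sum (f := fun j => y j - x j)
            (fun j _ => sub_nonneg.2 (hxy j)) (Finset.mem_univ j)
        simp only [hS]; linarith) hS0
    refine le_trans (le_of_eq ?_) this
    congr 1 <;> funext j <;> ring
  have hd2 : dist (fun k => (w k + wh k) / 2) (fun k => (v k + wh k) / 2) ≤ S / 2 := by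
    have := mid_dist_bound (u := w) (u' := v) wh hwv (S := S)
      (fun k => by
        have : v k - w k ≤ ∑ k, (v k - w k) :=
          Finset.single_le_sum (f := fun k => v k - w k)
            (fun k _ => sub_nonneg.2 (hwv k)) (Finset.mem_univ k)
        simp only [hS]; linarith) hS0
    refine le_trans (le_of_eq ?_) this
    congr 1 <;> funext k <;> ring
  have hdp : dist (((fun j => (x j + xh j) / 2 : Fin n → ℝ)), ((fun k => (w k + wh k) / 2 : Fin m → ℝ)))
      (((fun j => (y j + xh j) / 2 : Fin n → ℝ)), ((fun k => (v k + wh k) / 2 : Fin m → ℝ))) ≤ S / 2 := by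
    rw [Prod.dist_eq]; exact max_le hd1 hd2
  rw [← Real.dist_eq]
  refine (dist_le_pi_dist _ _ i).trans ((hF.dist_le_mul
    (((fun j => (x j + xh j) / 2 : Fin n → ℝ)), ((fun k => (w k + wh k) / 2 : Fin m → ℝ)))
    (((fun j => (y j + xh j) / 2 : Fin n → ℝ)), ((fun k => (v k + wh k) / 2 : Fin m → ℝ)))).trans ?_)
  exact mul_le_mul_of_nonneg_left hdp K.coe_nonneg

/-- key estimate, hat version: varying (xh,wh) ↦ (yh,vh) upward in the second midpoint slots. -/
lemma decomp_key' {n m : ℕ} {F : (Fin n → ℝ) → (Fin m → ℝ) → Fin n → ℝ} {K : NNReal}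
    (hF : LipschitzWith K (fun p : (Fin n → ℝ) × (Fin m → ℝ) => F p.1 p.2))
    (i : Fin n) (x : Fin n → ℝ) {xh yh : Fin n → ℝ} (w : Fin m → ℝ) {wh vh : Fin m → ℝ}
    (hxy : xh ≤ yh) (hwv : wh ≤ vh) :
    |F (fun j => (x j + xh j) / 2) (fun k => (w k + wh k) / 2) i
      - F (fun j => (x j + yh j) / 2) (fun k => (w k + vh k) / 2) i|
    ≤ (K : ℝ) * (((∑ j, (yh j - xh j)) + ∑ k, (vh k - wh k)) / 2) := by
  set S : ℝ := (∑ j, (yh j - xh j)) + ∑ k, (vh k - wh k) with hS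
  have hSx : (0:ℝ) ≤ ∑ j, (yh j - xh j) := Finset.sum_nonneg fun j _ => sub_nonneg.2 (hxy j)
  have hSw : (0:ℝ) ≤ ∑ k, (vh k - wh k) := Finset.sum_nonneg fun k _ => sub_nonneg.2 (hwv k)
  have hS0 : 0 ≤ S := by linarith
  have hd1 : dist (fun j => (x j + xh j) / 2) (fun j => (x j + yh j) / 2) ≤ S / 2 :=
    mid_dist_bound x hxy
      (fun j => by
        have : yh j - xh j ≤ ∑ j, (yh j - xh j) :=
          Finset.single_le_sum (f := fun j => yh j - xh j)
            (fun j _ => sub_nonneg.2 (hxy j)) (Finset.mem_univ j)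
        simp only [hS]; linarith) hS0
  have hd2 : dist (fun k => (w k + wh k) / 2) (fun k => (w k + vh k) / 2) ≤ S / 2 :=
    mid_dist_bound w hwv
      (fun k => by
        have : vh k - wh k ≤ ∑ k, (vh k - wh k) :=
          Finset.single_le_sum (f := fun k => vh k - wh k)
            (fun k _ => sub_nonneg.2 (hwv k)) (Finset.mem_univ k)
        simp only [hS]; linarith) hS0
  have hdp : dist (((fun j => (x j + xh j) / 2 : Fin n → ℝ)), ((fun k => (w k + wh k) / 2 : Fin m → ℝ)))
      (((fun j => (x j + yh j) / 2 : Fin n → ℝ)), ((fun k => (w k + vh k) / 2 : Fin m → ℝ))) ≤ S / 2 := by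
    rw [Prod.dist_eq]; exact max_le hd1 hd2
  rw [← Real.dist_eq]
  refine (dist_le_pi_dist _ _ i).trans ((hF.dist_le_mul
    (((fun j => (x j + xh j) / 2 : Fin n → ℝ)), ((fun k => (w k + wh k) / 2 : Fin m → ℝ)))
    (((fun j => (x j + yh j) / 2 : Fin n → ℝ)), ((fun k => (w k + vh k) / 2 : Fin m → ℝ)))).trans ?_)
  exact mul_le_mul_of_nonneg_left hdp K.coe_nonneg

/-- Theorem 1, existence part: every Lipschitz continuous vector field
`F : ℝⁿ × ℝᵐ → ℝⁿ` admits a decomposition function `δ` that is Lipschitz continuous on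
the set `T`; i.e., every continuous-time system `ẋ = F(x,w)` with Lipschitz vector field
is mixed-monotone. -/
theorem stmt17 {n m : ℕ} (F : (Fin n → ℝ) → (Fin m → ℝ) → Fin n → ℝ) (K : NNReal)
    (hF : LipschitzWith K (fun p : (Fin n → ℝ) × (Fin m → ℝ) => F p.1 p.2)) :
    ∃ (δ : (Fin n → ℝ) → (Fin m → ℝ) → (Fin n → ℝ) → (Fin m → ℝ) → Fin n → ℝ)
      (K' : NNReal),
      LipschitzOnWith K'
        (fun p : (Fin n → ℝ) × (Fin m → ℝ) × (Fin n → ℝ) × (Fin m → ℝ) =>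
          δ p.1 p.2.1 p.2.2.1 p.2.2.2)
        {p : (Fin n → ℝ) × (Fin m → ℝ) × (Fin n → ℝ) × (Fin m → ℝ) |
          InT p.1 p.2.1 p.2.2.1 p.2.2.2} ∧
      IsDecompFn F δ := by
  refine ⟨decomp F K, K * ((n : NNReal) + m + 1), ?_, ?_, ?_, ?_⟩
  · -- Lipschitz
    refine LipschitzWith.lipschitzOnWith (LipschitzWith.of_dist_le_mul fun p q => ?_)
    obtain ⟨x, w, xh, wh⟩ := p
    obtain ⟨x', w', xh', wh'⟩ := q
    set D : ℝ := dist ((x, w, xh, wh) : (Fin n → ℝ) × (Fin m → ℝ) × (Fin n → ℝ) × (Fin m → ℝ))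
      (x', w', xh', wh') with hD
    have hD0 : 0 ≤ D := dist_nonneg
    have hdx : dist x x' ≤ D := by rw [hD, Prod.dist_eq]; exact le_max_left _ _
    have hrest : dist ((w, xh, wh) : (Fin m → ℝ) × (Fin n → ℝ) × (Fin m → ℝ)) (w', xh', wh') ≤ D := by
      rw [hD, Prod.dist_eq]; exact le_max_right _ _
    have hdw : dist w w' ≤ D := le_trans (by rw [Prod.dist_eq]; exact le_max_left _ _) hrest
    have hrest2 : dist ((xh, wh) : (Fin n → ℝ) × (Fin m → ℝ)) (xh', wh') ≤ D :=
      le_trans (by rw [Prod.dist_eq]; exact le_max_right _ _) hrest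
    have hdxh : dist xh xh' ≤ D := le_trans (by rw [Prod.dist_eq]; exact le_max_left _ _) hrest2
    have hdwh : dist wh wh' ≤ D := le_trans (by rw [Prod.dist_eq]; exact le_max_right _ _) hrest2
    have hK' : ((K * ((n : NNReal) + m + 1) : NNReal) : ℝ) = (K:ℝ) * ((n:ℝ) + m + 1) := by
      push_cast; ring
    rw [hK']
    have hr : 0 ≤ (K:ℝ) * ((n:ℝ) + m + 1) * D := by positivity
    refine (dist_pi_le_iff hr).2 fun i => ?_
    -- midpoint distance bound
    have hd1 : dist (fun j => (x j + xh j) / 2) (fun j => (x' j + xh' j) / 2) ≤ D := by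
      refine (dist_pi_le_iff hD0).2 fun j => ?_
      have h1 : dist (x j) (x' j) ≤ D := (dist_le_pi_dist x x' j).trans hdx
      have h2 : dist (xh j) (xh' j) ≤ D := (dist_le_pi_dist xh xh' j).trans hdxh
      rw [Real.dist_eq] at h1 h2 ⊢
      have e : (x j + xh j) / 2 - (x' j + xh' j) / 2
          = ((x j - x' j) + (xh j - xh' j)) / 2 := by ring
      rw [e]
      have := abs_add_le (x j - x' j) (xh j - xh' j)
      rw [abs_div]
      rw [abs_of_nonneg (by norm_num : (0:ℝ) ≤ 2)]
      linarith
    have hd2 : dist (fun k => (w k + wh k) / 2) (fun k => (w' k + wh' k) / 2) ≤ D := by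
      refine (dist_pi_le_iff hD0).2 fun k => ?_
      have h1 : dist (w k) (w' k) ≤ D := (dist_le_pi_dist w w' k).trans hdw
      have h2 : dist (wh k) (wh' k) ≤ D := (dist_le_pi_dist wh wh' k).trans hdwh
      rw [Real.dist_eq] at h1 h2 ⊢
      have e : (w k + wh k) / 2 - (w' k + wh' k) / 2
          = ((w k - w' k) + (wh k - wh' k)) / 2 := by ring
      rw [e, abs_div, abs_of_nonneg (by norm_num : (0:ℝ) ≤ 2)]
      have := abs_add_le (w k - w' k) (wh k - wh' k)
      linarith
    have hdp : dist (((fun j => (x j + xh j) / 2 : Fin n → ℝ)), ((fun k => (w k + wh k) / 2 : Fin m → ℝ)))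
        (((fun j => (x' j + xh' j) / 2 : Fin n → ℝ)), ((fun k => (w' k + wh' k) / 2 : Fin m → ℝ))) ≤ D := by
      rw [Prod.dist_eq]; exact max_le hd1 hd2
    have hFi : |F (fun j => (x j + xh j) / 2) (fun k => (w k + wh k) / 2) i
        - F (fun j => (x' j + xh' j) / 2) (fun k => (w' k + wh' k) / 2) i| ≤ (K:ℝ) * D := by
      rw [← Real.dist_eq]
      refine (dist_le_pi_dist _ _ i).trans ((hF.dist_le_mul
        (((fun j => (x j + xh j) / 2 : Fin n → ℝ)), ((fun k => (w k + wh k) / 2 : Fin m → ℝ)))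
        (((fun j => (x' j + xh' j) / 2 : Fin n → ℝ)), ((fun k => (w' k + wh' k) / 2 : Fin m → ℝ)))).trans ?_)
      exact mul_le_mul_of_nonneg_left hdp K.coe_nonneg
    have hs1 : |(∑ j, x j) - ∑ j, x' j| ≤ n * D := (sum_dist_bound x x').trans
      (mul_le_mul_of_nonneg_left hdx (Nat.cast_nonneg n))
    have hs2 : |(∑ j, xh j) - ∑ j, xh' j| ≤ n * D := (sum_dist_bound xh xh').trans
      (mul_le_mul_of_nonneg_left hdxh (Nat.cast_nonneg n))
    have hs3 : |(∑ k, w k) - ∑ k, w' k| ≤ m * D := (sum_dist_bound w w').trans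
      (mul_le_mul_of_nonneg_left hdw (Nat.cast_nonneg m))
    have hs4 : |(∑ k, wh k) - ∑ k, wh' k| ≤ m * D := (sum_dist_bound wh wh').trans
      (mul_le_mul_of_nonneg_left hdwh (Nat.cast_nonneg m))
    have hLd : |(((∑ j, x j) - ∑ j, xh j) + ((∑ k, w k) - ∑ k, wh k))
        - (((∑ j, x' j) - ∑ j, xh' j) + ((∑ k, w' k) - ∑ k, wh' k))|
        ≤ (2 * n + 2 * m) * D := by
      have e : (((∑ j, x j) - ∑ j, xh j) + ((∑ k, w k) - ∑ k, wh k))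
          - (((∑ j, x' j) - ∑ j, xh' j) + ((∑ k, w' k) - ∑ k, wh' k))
          = (((∑ j, x j) - ∑ j, x' j) - ((∑ j, xh j) - ∑ j, xh' j))
            + (((∑ k, w k) - ∑ k, w' k) - ((∑ k, wh k) - ∑ k, wh' k)) := by ring
      rw [e]
      calc _ ≤ |((∑ j, x j) - ∑ j, x' j) - ((∑ j, xh j) - ∑ j, xh' j)|
              + |((∑ k, w k) - ∑ k, w' k) - ((∑ k, wh k) - ∑ k, wh' k)| := abs_add_le _ _
        _ ≤ (|(∑ j, x j) - ∑ j, x' j| + |(∑ j, xh j) - ∑ j, xh' j|)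
              + (|(∑ k, w k) - ∑ k, w' k| + |(∑ k, wh k) - ∑ k, wh' k|) :=
            add_le_add (abs_sub' _ _) (abs_sub' _ _)
        _ ≤ (2 * n + 2 * m) * D := by linarith
    simp only [decomp]
    rw [Real.dist_eq]
    have e2 : (F (fun j => (x j + xh j) / 2) (fun k => (w k + wh k) / 2) i
        + ((K:ℝ) / 2) * (((∑ j, x j) - ∑ j, xh j) + ((∑ k, w k) - ∑ k, wh k)))
        - (F (fun j => (x' j + xh' j) / 2) (fun k => (w' k + wh' k) / 2) i
        + ((K:ℝ) / 2) * (((∑ j, x' j) - ∑ j, xh' j) + ((∑ k, w' k) - ∑ k, wh' k)))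
        = (F (fun j => (x j + xh j) / 2) (fun k => (w k + wh k) / 2) i
          - F (fun j => (x' j + xh' j) / 2) (fun k => (w' k + wh' k) / 2) i)
        + ((K:ℝ) / 2) * ((((∑ j, x j) - ∑ j, xh j) + ((∑ k, w k) - ∑ k, wh k))
          - (((∑ j, x' j) - ∑ j, xh' j) + ((∑ k, w' k) - ∑ k, wh' k))) := by ring
    rw [e2]
    refine (abs_add_le _ _).trans ?_
    rw [abs_mul, abs_of_nonneg (by positivity : (0:ℝ) ≤ (K:ℝ)/2)]
    have h3 : ((K:ℝ)/2) * |(((∑ j, x j) - ∑ j, xh j) + ((∑ k, w k) - ∑ k, wh k))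
        - (((∑ j, x' j) - ∑ j, xh' j) + ((∑ k, w' k) - ∑ k, wh' k))|
        ≤ ((K:ℝ)/2) * ((2 * n + 2 * m) * D) :=
      mul_le_mul_of_nonneg_left hLd (by positivity)
    have e3 : (K:ℝ) * D + ((K:ℝ)/2) * ((2 * n + 2 * m) * D) = (K:ℝ) * ((n:ℝ) + m + 1) * D := by
      ring
    linarith
  · -- D1
    intro x w
    funext i
    simp only [decomp]
    have h1 : (fun j => (x j + x j) / 2) = x := by funext j; ring
    have h2 : (fun k => (w k + w k) / 2) = w := by funext k; ring
    rw [h1, h2]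
    ring
  · -- C1
    intro i x y xh w v wh _ _ hxy _ hwv
    have hkey := (abs_le.1 (decomp_key hF i xh wh hxy hwv)).2
    simp only [decomp]
    rw [Finset.sum_sub_distrib, Finset.sum_sub_distrib] at hkey
    have e : (K:ℝ) * ((((∑ j, y j) - ∑ j, x j) + ((∑ k, v k) - ∑ k, w k)) / 2)
        = ((K:ℝ)/2) * (((∑ j, y j) - ∑ j, xh j) + ((∑ k, v k) - ∑ k, wh k))
          - ((K:ℝ)/2) * (((∑ j, x j) - ∑ j, xh j) + ((∑ k, w k) - ∑ k, wh k)) := by ring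
    rw [e] at hkey
    linarith
  · -- C2
    intro i x xh yh w wh vh _ _ hxy hwv
    have hkey := (abs_le.1 (decomp_key' hF i x w hxy hwv)).1
    simp only [decomp]
    rw [Finset.sum_sub_distrib, Finset.sum_sub_distrib] at hkey
    have e : -((K:ℝ) * ((((∑ j, yh j) - ∑ j, xh j) + ((∑ k, vh k) - ∑ k, wh k)) / 2))
        = ((K:ℝ)/2) * (((∑ j, x j) - ∑ j, yh j) + ((∑ k, w k) - ∑ k, vh k))
          - ((K:ℝ)/2) * (((∑ j, x j) - ∑ j, xh j) + ((∑ k, w k) - ∑ k, wh k)) := by ring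
    rw [e] at hkey
    linarith
end
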